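/- arXiv:2311.08108 — 11 statements merged into one kernel-verified Lean document; each statement's English description precedes it below -/
import Mathlib

section
/- Let ρ = U(σ_1 ⊗ ⋯ ⊗ σ_L)U† be an FDQC state of depth ℓ on a chain of L qubits, and let A, B, C be three disjoint consecutive intervals of qubits, with B separating A from C and |B| ≥ 2ℓ − 1. Then for every integer n ≥ 1, Tr((ρ_{A∪B∪C})^n) · Tr((ρ_B)^n) = Tr((ρ_{A∪B})^n) · Tr((ρ_{B∪C})^n). -/
open Matrix

/-- Computational-basis configurations of a chain of `L` qubits. -/
abbrev QubitConf (L : ℕ) := Fin L → Fin 2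

/-- Linear operators on the Hilbert space `(ℂ²)^{⊗L}`, written as matrices in the
computational basis. -/
abbrev QubitOp (L : ℕ) := Matrix (QubitConf L) (QubitConf L) ℂ

/-- The operator acting as the two-qubit gate `g` on the qubits `a, b` and as the identity
on all other qubits. -/
noncomputable def gateAt (L : ℕ) (a b : Fin L)
    (g : Matrix (Fin 2 × Fin 2) (Fin 2 × Fin 2) ℂ) : QubitOp L :=
  fun f f' => g (f a, f b) (f' a, f' b) *
    ∏ i ∈ Finset.univ \ ({a, b} : Finset (Fin L)), (if f i = f' i then (1 : ℂ) else 0)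

/-- `V` is a brickwork layer with offset `p ∈ {0,1}`: a product of unitary two-qubit gates
acting on the disjoint nearest-neighbour pairs `(2j + p, 2j + p + 1)`. -/
def IsBrickLayer (L p : ℕ) (V : QubitOp L) : Prop :=
  ∃ g : ℕ → Matrix (Fin 2 × Fin 2) (Fin 2 × Fin 2) ℂ,
    (∀ j, g j ∈ Matrix.unitaryGroup (Fin 2 × Fin 2) ℂ) ∧
    V = ((List.range L).filterMap (fun j =>
          if h : 2 * j + p + 1 < L then
            some (gateAt L ⟨2 * j + p, by omega⟩ ⟨2 * j + p + 1, h⟩ (g j))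
          else none)).prod

/-- `U` is a local quantum circuit of depth `ℓ`: `U = V_ℓ ⋯ V₂ V₁`, where the odd layers
couple the qubit pairs `(0,1), (2,3), …` and the even layers couple `(1,2), (3,4), …`
(brickwork pattern). -/
def IsLocalCircuit (L ℓ : ℕ) (U : QubitOp L) : Prop :=
  ∃ V : ℕ → QubitOp L,
    (∀ t, 1 ≤ t → t ≤ ℓ → IsBrickLayer L ((t + 1) % 2) (V t)) ∧
    U = ((List.range ℓ).map (fun t => V (ℓ - t))).prod

/-- The product state `σ₁ ⊗ ⋯ ⊗ σ_L`. -/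
noncomputable def prodState (L : ℕ) (σ : Fin L → Matrix (Fin 2) (Fin 2) ℂ) : QubitOp L :=
  fun f g => ∏ i, σ i (f i) (g i)

open scoped ComplexOrder in
/-- `ρ` is a finite-depth quantum-circuit (FDQC) state of depth `ℓ`:
`ρ = U (σ₁ ⊗ ⋯ ⊗ σ_L) U†` with `U` a local circuit of depth `ℓ` and each `σ_j` a
single-qubit density matrix. -/
def IsFDQCState (L ℓ : ℕ) (ρ : QubitOp L) : Prop :=
  ∃ (U : QubitOp L) (σ : Fin L → Matrix (Fin 2) (Fin 2) ℂ),
    IsLocalCircuit L ℓ U ∧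
    (∀ i, (σ i).PosSemidef ∧ (σ i).trace = 1) ∧
    ρ = U * prodState L σ * Uᴴ

/-- The reduced density matrix of `ρ` on the set `S` of qubits (partial trace over the
complement of `S`). -/
noncomputable def reducedDM (L : ℕ) (S : Finset (Fin L)) (ρ : QubitOp L) :
    Matrix ({ i : Fin L // i ∈ S } → Fin 2) ({ i : Fin L // i ∈ S } → Fin 2) ℂ :=
  fun f g => ∑ h : { i : Fin L // i ∉ S } → Fin 2,
    ρ (fun i => if hi : i ∈ S then f ⟨i, hi⟩ else h ⟨i, hi⟩)
      (fun i => if hi : i ∈ S then g ⟨i, hi⟩ else h ⟨i, hi⟩)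

/-- The interval of qubits `{i : a ≤ i < b}` in a chain of `L` qubits. -/
def qInterval (L a b : ℕ) : Finset (Fin L) :=
  Finset.univ.filter (fun i => a ≤ (i : ℕ) ∧ (i : ℕ) < b)

/-!
Cut the chain between the sites `m - 1` and `m`, where `m` is an even site of `B` whose light
cone after `ℓ` layers stays inside `B`. Going through the layers from the first one, each
brickwork layer splits into the gates inside the light cone and gates lying on one side of the
cut; the latter commute with the light-cone part collected so far, so `U = C W` with `C` unitary
and supported in `B` and `W` a product across the cut. For `X ⊇ B` the local unitary `C` drops
out of `Tr (ρ_X ^ n)`, and `W (σ₁ ⊗ ⋯ ⊗ σ_L) W†` is a product across the cut, so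
`Tr (ρ_X ^ n) = F (X ∩ [0, m)) * G (X \ [0, m))`. Since `A` lies left and `C` right of the cut,
both sides of the identity are products of `F` and `G` at the same four sets.
-/

open scoped Kronecker

theorem List.prod_filter_mul_prod_filter_not_of_commute {M : Type*} [Monoid M] (l : List M)
    (q : M → Bool) (h : ∀ a ∈ l, ∀ b ∈ l, q a → q b = false → Commute a b) :
    (l.filter q).prod * (l.filter (fun a => !q a)).prod = l.prod := by
  induction l with
  | nil => simp
  | cons x l ih =>
    have ih := ih fun a ha b hb => h a (mem_cons_of_mem _ ha) b (mem_cons_of_mem _ hb)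
    cases hx : q x
    · have hcomm : Commute (l.filter q).prod x := Commute.list_prod_left _ _ fun a ha =>
        h a (mem_cons_of_mem _ (mem_filter.1 ha).1) x mem_cons_self (mem_filter.1 ha).2 hx
      simp [hx, ← ih, ← mul_assoc, hcomm.eq]
    · simp [hx, mul_assoc, ih]

namespace ManyBody

section TracePower

variable {m n R : Type*} [Fintype m] [DecidableEq m] [Fintype n] [DecidableEq n] [CommRing R]

lemma submatrix_mem_unitaryGroup [StarRing R] (e : m ≃ n) {U : Matrix n n R}
    (hU : U ∈ unitaryGroup n R) : U.submatrix e e ∈ unitaryGroup m R := by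
  rw [mem_unitaryGroup_iff, star_eq_conjTranspose, conjTranspose_submatrix, submatrix_mul_equiv,
    ← star_eq_conjTranspose, mem_unitaryGroup_iff.1 hU, submatrix_one_equiv]

lemma trace_pow_submatrix_equiv (e : m ≃ n) (M : Matrix n n R) (k : ℕ) :
    trace ((M.submatrix e e) ^ k) = trace (M ^ k) := by
  have hpow : (M.submatrix e e) ^ k = (M ^ k).submatrix e e := by
    simpa using (map_pow (reindexAlgEquiv R R e.symm) M k).symm
  rw [hpow]
  exact e.sum_comp fun i => (M ^ k) i i

lemma trace_pow_kronecker (A : Matrix m m R) (B : Matrix n n R) (k : ℕ) :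
    trace ((A ⊗ₖ B) ^ k) = trace (A ^ k) * trace (B ^ k) := by
  have hpow : (A ⊗ₖ B) ^ k = (A ^ k) ⊗ₖ (B ^ k) := by
    induction k with
    | zero => simp
    | succ k ih => rw [pow_succ, ih, ← mul_kronecker_mul, pow_succ, pow_succ]
  rw [hpow, trace_kronecker]

lemma trace_pow_unitary_conj [StarRing R] {c : Matrix m m R} (hc : c ∈ unitaryGroup m R)
    (M : Matrix m m R) (k : ℕ) : trace ((c * M * cᴴ) ^ k) = trace (M ^ k) := by
  have hpow : (c * M * cᴴ) ^ k = c * M ^ k * cᴴ := by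
    simpa [star_eq_conjTranspose] using Units.conj_pow (Unitary.toUnits ⟨c, hc⟩) M k
  rw [hpow, trace_mul_cycle, ← star_eq_conjTranspose, Unitary.star_mul_self_of_mem hc, one_mul]

end TracePower

lemma one_apply_restrict {ι α R : Type*} [Fintype ι] [DecidableEq α] [Zero R] [One R]
    (p : ι → Prop) [DecidablePred p] (f g : ι → α) :
    (1 : Matrix ({i // p i} → α) ({i // p i} → α) R) (fun i => f i) (fun i => g i) =
      if ∀ i, p i → f i = g i then 1 else 0 := by
  simp only [one_apply, funext_iff, Subtype.forall]

section Tensor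

variable {ι α R : Type*} [DecidableEq ι] [CommRing R]

abbrev confSplit (p : ι → Prop) [DecidablePred p] :
    (ι → α) ≃ ({i // p i} → α) × ({i // ¬p i} → α) :=
  Equiv.piEquivPiSubtypeProd p fun _ => α

def tensorAt (S : Finset ι) (A : Matrix ({i // i ∈ S} → α) ({i // i ∈ S} → α) R)
    (B : Matrix ({i // i ∉ S} → α) ({i // i ∉ S} → α) R) : Matrix (ι → α) (ι → α) R :=
  (A ⊗ₖ B).submatrix (confSplit (· ∈ S)) (confSplit (· ∈ S))

variable {S : Finset ι}

lemma tensorAt_apply (A : Matrix ({i // i ∈ S} → α) ({i // i ∈ S} → α) R)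
    (B : Matrix ({i // i ∉ S} → α) ({i // i ∉ S} → α) R) (f g : ι → α) :
    tensorAt S A B f g = A (fun i => f i) (fun i => g i) * B (fun i => f i) (fun i => g i) :=
  rfl

lemma conjTranspose_tensorAt [StarRing R] (A : Matrix ({i // i ∈ S} → α) ({i // i ∈ S} → α) R)
    (B : Matrix ({i // i ∉ S} → α) ({i // i ∉ S} → α) R) :
    (tensorAt S A B)ᴴ = tensorAt S Aᴴ Bᴴ := by
  rw [tensorAt, conjTranspose_submatrix, conjTranspose_kronecker, tensorAt]

lemma tensorAt_mul_tensorAt [Fintype ι] [Fintype α]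
    (A A' : Matrix ({i // i ∈ S} → α) ({i // i ∈ S} → α) R)
    (B B' : Matrix ({i // i ∉ S} → α) ({i // i ∉ S} → α) R) :
    tensorAt S A B * tensorAt S A' B' = tensorAt S (A * A') (B * B') := by
  rw [tensorAt, tensorAt, submatrix_mul_equiv, ← mul_kronecker_mul, tensorAt]

variable [Fintype ι] [DecidableEq α]

lemma tensorAt_one_one : tensorAt S (1 : Matrix ({i // i ∈ S} → α) _ R) 1 = 1 := by
  rw [tensorAt, one_kronecker_one, submatrix_one_equiv]

lemma tensorAt_left_injective [Nonempty α] :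
    Function.Injective fun k : Matrix ({i // i ∈ S} → α) ({i // i ∈ S} → α) R =>
      tensorAt S k 1 := by
  intro k k' h
  ext u v
  have := congr_fun₂ h ((confSplit (· ∈ S)).symm (u, fun _ => Classical.arbitrary α))
    ((confSplit (· ∈ S)).symm (v, fun _ => Classical.arbitrary α))
  simpa [tensorAt] using this

def extendTo (q : ι → Prop) [DecidablePred q] (hS : ∀ i ∈ S, q i)
    (k : Matrix ({i // i ∈ S} → α) ({i // i ∈ S} → α) R) :
    Matrix ({i // q i} → α) ({i // q i} → α) R :=
  fun u v => k (fun i => u ⟨i, hS i i.2⟩) (fun i => v ⟨i, hS i i.2⟩) *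
    if ∀ i : {i // q i}, i.1 ∉ S → u i = v i then 1 else 0

lemma extendTo_apply_mul_one_apply (q : ι → Prop) [DecidablePred q] (hS : ∀ i ∈ S, q i)
    (k : Matrix ({i // i ∈ S} → α) ({i // i ∈ S} → α) R) (f g : ι → α) :
    extendTo q hS k (fun i => f i) (fun i => g i) *
        (1 : Matrix ({i // ¬q i} → α) ({i // ¬q i} → α) R) (fun i => f i) (fun i => g i) =
      tensorAt S k 1 f g := by
  rw [extendTo, tensorAt_apply, one_apply_restrict, one_apply_restrict, mul_assoc,
    ite_zero_mul_ite_zero, one_mul]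
  congr 2
  simp only [Subtype.forall, eq_iff_iff]
  constructor
  · rintro ⟨hq, hnq⟩ i hi
    by_cases h : q i
    exacts [hq i h hi, hnq i h]
  · intro h
    exact ⟨fun i _ hi => h i hi, fun i hi => h i fun hS' => hi (hS i hS')⟩

lemma tensorAt_eq_one_tensorAt_of_disjoint {P : Finset ι} (h : Disjoint S P)
    (k : Matrix ({i // i ∈ S} → α) ({i // i ∈ S} → α) R) :
    tensorAt S k 1 =
      tensorAt P 1 (extendTo (· ∉ P) (fun _ hi => Finset.disjoint_left.1 h hi) k) := by
  ext f g
  rw [← extendTo_apply_mul_one_apply (· ∉ P) (fun _ hi => Finset.disjoint_left.1 h hi),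
    tensorAt_apply, mul_comm]
  simp only [one_apply, funext_iff, Subtype.forall, not_not]

variable [Fintype α]

lemma tensorAt_one_mem_unitaryGroup_iff [Nonempty α] [StarRing R]
    {k : Matrix ({i // i ∈ S} → α) ({i // i ∈ S} → α) R} :
    tensorAt S k 1 ∈ unitaryGroup (ι → α) R ↔ k ∈ unitaryGroup _ R := by
  rw [mem_unitaryGroup_iff, mem_unitaryGroup_iff, star_eq_conjTranspose, star_eq_conjTranspose,
    conjTranspose_tensorAt, tensorAt_mul_tensorAt, conjTranspose_one, mul_one,
    ← tensorAt_one_one (ι := ι), tensorAt_left_injective.eq_iff]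

variable (α R) in
def localOps (S : Finset ι) : Submonoid (Matrix (ι → α) (ι → α) R) where
  carrier := {M | ∃ k, M = tensorAt S k 1}
  mul_mem' := by
    rintro _ _ ⟨k, rfl⟩ ⟨k', rfl⟩
    exact ⟨k * k', by rw [tensorAt_mul_tensorAt, one_mul]⟩
  one_mem' := ⟨1, tensorAt_one_one.symm⟩

variable (α R) in
def productOps (P : Finset ι) : Submonoid (Matrix (ι → α) (ι → α) R) where
  carrier := {M | ∃ A B, M = tensorAt P A B}
  mul_mem' := by
    rintro _ _ ⟨A, B, rfl⟩ ⟨A', B', rfl⟩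
    exact ⟨A * A', B * B', tensorAt_mul_tensorAt A A' B B'⟩
  one_mem' := ⟨1, 1, tensorAt_one_one.symm⟩

lemma localOps_mono {T : Finset ι} (h : S ⊆ T) : localOps α R S ≤ localOps α R T := by
  rintro _ ⟨k, rfl⟩
  refine ⟨extendTo (· ∈ T) h k, ?_⟩
  ext f g
  rw [← extendTo_apply_mul_one_apply (· ∈ T) h, tensorAt_apply]

lemma localOps_le_productOps_of_subset {P : Finset ι} (h : S ⊆ P) :
    localOps α R S ≤ productOps α R P := by
  intro M hM
  obtain ⟨k, rfl⟩ := localOps_mono h hM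
  exact ⟨k, 1, rfl⟩

lemma localOps_le_productOps_of_disjoint {P : Finset ι} (h : Disjoint S P) :
    localOps α R S ≤ productOps α R P := by
  rintro _ ⟨k, rfl⟩
  exact ⟨1, _, tensorAt_eq_one_tensorAt_of_disjoint h k⟩

lemma commute_of_mem_localOps_of_disjoint {T : Finset ι} {M N : Matrix (ι → α) (ι → α) R}
    (hM : M ∈ localOps α R S) (hN : N ∈ localOps α R T) (h : Disjoint S T) : Commute M N := by
  obtain ⟨k, rfl⟩ := hM
  obtain ⟨k', rfl⟩ := hN
  rw [tensorAt_eq_one_tensorAt_of_disjoint h.symm k']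
  simp only [Commute, SemiconjBy, tensorAt_mul_tensorAt, one_mul, mul_one]

lemma conjTranspose_mem_productOps [StarRing R] {P : Finset ι}
    {M : Matrix (ι → α) (ι → α) R} (hM : M ∈ productOps α R P) : Mᴴ ∈ productOps α R P := by
  obtain ⟨A, B, rfl⟩ := hM
  exact ⟨Aᴴ, Bᴴ, conjTranspose_tensorAt A B⟩

end Tensor

section PartialTrace

variable {ι α R : Type*} [Fintype ι] [DecidableEq ι] [Fintype α] [CommRing R]

def ptrace (p : ι → Prop) [DecidablePred p] (M : Matrix (ι → α) (ι → α) R) :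
    Matrix ({i // p i} → α) ({i // p i} → α) R :=
  fun u v => ∑ h, M ((confSplit p).symm (u, h)) ((confSplit p).symm (v, h))

lemma ptrace_tensorAt_one_mul [DecidableEq α] (X : Finset ι)
    (c : Matrix ({i // i ∈ X} → α) ({i // i ∈ X} → α) R) (M : Matrix (ι → α) (ι → α) R) :
    ptrace (· ∈ X) (tensorAt X c 1 * M) = c * ptrace (· ∈ X) M := by
  ext u v
  simp only [ptrace, mul_apply, ← (confSplit (· ∈ X)).symm.sum_comp, Fintype.sum_prod_type,
    tensorAt, submatrix_apply, Equiv.apply_symm_apply, kronecker_apply, one_apply, mul_ite,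
    mul_one, mul_zero, ite_mul, zero_mul, Finset.sum_ite_eq, Finset.mem_univ, if_true,
    Finset.mul_sum]
  exact Finset.sum_comm

lemma ptrace_mul_tensorAt_one [DecidableEq α] (X : Finset ι)
    (c : Matrix ({i // i ∈ X} → α) ({i // i ∈ X} → α) R) (M : Matrix (ι → α) (ι → α) R) :
    ptrace (· ∈ X) (M * tensorAt X c 1) = ptrace (· ∈ X) M * c := by
  ext u v
  simp only [ptrace, mul_apply, ← (confSplit (· ∈ X)).symm.sum_comp, Fintype.sum_prod_type,
    tensorAt, submatrix_apply, Equiv.apply_symm_apply, kronecker_apply, one_apply, mul_ite,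
    mul_one, mul_zero, Finset.sum_ite_eq', Finset.mem_univ, if_true, Finset.sum_mul]
  exact Finset.sum_comm

def splitAlong (p r : ι → Prop) [DecidablePred r] :
    ({i // p i} → α) ≃ ({j : {i // r i} // p j} → α) × ({j : {i // ¬r i} // p j} → α) where
  toFun u := (fun j => u ⟨j.1, j.2⟩, fun j => u ⟨j.1, j.2⟩)
  invFun w i := if h : r i then w.1 ⟨⟨i, h⟩, i.2⟩ else w.2 ⟨⟨i, h⟩, i.2⟩
  left_inv u := by
    funext i
    by_cases h : r i <;> simp [h]
  right_inv w := by
    ext j <;> simp [j.1.2]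

lemma ptrace_tensorAt (p : ι → Prop) [DecidablePred p] (P : Finset ι)
    (A : Matrix ({i // i ∈ P} → α) ({i // i ∈ P} → α) R)
    (B : Matrix ({i // i ∉ P} → α) ({i // i ∉ P} → α) R) :
    ptrace p (tensorAt P A B) =
      (ptrace (fun j : {i // i ∈ P} => p j) A ⊗ₖ ptrace (fun j : {i // i ∉ P} => p j) B).submatrix
        (splitAlong p (· ∈ P)) (splitAlong p (· ∈ P)) := by
  ext u v
  rw [submatrix_apply, kronecker_apply, ptrace, ptrace, ptrace, Finset.sum_mul_sum,
    ← Fintype.sum_prod_type']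
  exact Fintype.sum_equiv (splitAlong (¬p ·) (· ∈ P)) _ _ fun h => rfl

variable [DecidableEq α]

lemma trace_pow_ptrace_congr {p q : ι → Prop} [hp : DecidablePred p] [hq : DecidablePred q]
    (h : ∀ i, p i ↔ q i) (M : Matrix (ι → α) (ι → α) R) (k : ℕ) :
    trace ((ptrace p M) ^ k) = trace ((ptrace q M) ^ k) := by
  obtain rfl : p = q := funext fun i => propext (h i)
  obtain rfl : hp = hq := Subsingleton.elim _ _
  rfl

lemma exists_trace_pow_ptrace_eq_mul {P : Finset ι} {τ : Matrix (ι → α) (ι → α) R}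
    (hτ : τ ∈ productOps α R P) (k : ℕ) :
    ∃ F G : Finset ι → R, ∀ X : Finset ι,
      trace ((ptrace (· ∈ X) τ) ^ k) = F (X ∩ P) * G (X \ P) := by
  obtain ⟨A, B, rfl⟩ := hτ
  refine ⟨fun Y => trace ((ptrace (fun j : {i // i ∈ P} => j.1 ∈ Y) A) ^ k),
    fun Z => trace ((ptrace (fun j : {i // i ∉ P} => j.1 ∈ Z) B) ^ k), fun X => ?_⟩
  rw [ptrace_tensorAt, trace_pow_submatrix_equiv, trace_pow_kronecker]
  congr 1 <;> apply trace_pow_ptrace_congr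
  · exact fun j => by simp [j.2]
  · exact fun j => by simp [j.2]

lemma trace_pow_ptrace_unitary_conj [Nonempty α] [StarRing R] {X : Finset ι}
    {C : Matrix (ι → α) (ι → α) R} (hCX : C ∈ localOps α R X) (hC : C ∈ unitaryGroup _ R)
    (M : Matrix (ι → α) (ι → α) R) (k : ℕ) :
    trace ((ptrace (· ∈ X) (C * M * Cᴴ)) ^ k) = trace ((ptrace (· ∈ X) M) ^ k) := by
  obtain ⟨c, rfl⟩ := hCX
  rw [conjTranspose_tensorAt, conjTranspose_one, ptrace_mul_tensorAt_one,
    ptrace_tensorAt_one_mul, trace_pow_unitary_conj (tensorAt_one_mem_unitaryGroup_iff.1 hC)]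

end PartialTrace

lemma reducedDM_eq_ptrace (L : ℕ) (S : Finset (Fin L)) (ρ : QubitOp L) :
    reducedDM L S ρ = ptrace (· ∈ S) ρ :=
  rfl

lemma markov_identity_of_factorization {ι M : Type*} [DecidableEq ι] [CommMonoid M]
    {f F G : Finset ι → M} {P A B C : Finset ι} (hA : A ⊆ P) (hC : Disjoint C P)
    (hf : ∀ X, B ⊆ X → f X = F (X ∩ P) * G (X \ P)) :
    f (A ∪ B ∪ C) * f B = f (A ∪ B) * f (B ∪ C) := by
  have hA' : ∀ i ∈ A, i ∈ P := hA
  have hC' : ∀ i ∈ C, i ∉ P := fun _ hi => Finset.disjoint_left.1 hC hi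
  have h₁ : (A ∪ B ∪ C) ∩ P = (A ∪ B) ∩ P := by
    ext i; simp only [Finset.mem_inter, Finset.mem_union]; grind
  have h₂ : (A ∪ B ∪ C) \ P = (B ∪ C) \ P := by
    ext i; simp only [Finset.mem_sdiff, Finset.mem_union]; grind
  have h₃ : B ∩ P = (B ∪ C) ∩ P := by
    ext i; simp only [Finset.mem_inter, Finset.mem_union]; grind
  have h₄ : B \ P = (A ∪ B) \ P := by
    ext i; simp only [Finset.mem_sdiff, Finset.mem_union]; grind
  rw [hf _ (Finset.subset_union_right.trans Finset.subset_union_left), hf _ subset_rfl,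
    hf _ Finset.subset_union_right, hf _ Finset.subset_union_left, h₁, h₂, h₃, h₄]
  ac_rfl

def pairConfEquiv {ι α : Type*} [DecidableEq ι] {a b : ι} (hab : a ≠ b) :
    ({i // i ∈ ({a, b} : Finset ι)} → α) ≃ α × α where
  toFun u := (u ⟨a, by simp⟩, u ⟨b, by simp⟩)
  invFun x i := if i.1 = a then x.1 else x.2
  left_inv u := by
    funext ⟨i, hi⟩
    rcases Finset.mem_insert.1 hi with rfl | hi
    · simp
    · obtain rfl := Finset.mem_singleton.1 hi
      simp [hab.symm]
  right_inv x := by simp [hab.symm]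

lemma gateAt_eq_tensorAt {L : ℕ} {a b : Fin L} (hab : a ≠ b)
    (g : Matrix (Fin 2 × Fin 2) (Fin 2 × Fin 2) ℂ) :
    gateAt L a b g = tensorAt {a, b} (g.submatrix (pairConfEquiv hab) (pairConfEquiv hab)) 1 := by
  ext f f'
  rw [gateAt, tensorAt_apply, one_apply_restrict, Finset.prod_boole]
  simp [pairConfEquiv]

lemma gateAt_mem_localOps {L : ℕ} {a b : Fin L} (hab : a ≠ b)
    (g : Matrix (Fin 2 × Fin 2) (Fin 2 × Fin 2) ℂ) :
    gateAt L a b g ∈ localOps (Fin 2) ℂ {a, b} :=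
  ⟨_, gateAt_eq_tensorAt hab g⟩

lemma gateAt_mem_unitaryGroup {L : ℕ} {a b : Fin L} (hab : a ≠ b)
    {g : Matrix (Fin 2 × Fin 2) (Fin 2 × Fin 2) ℂ} (hg : g ∈ unitaryGroup _ ℂ) :
    gateAt L a b g ∈ unitaryGroup _ ℂ := by
  rw [gateAt_eq_tensorAt hab, tensorAt_one_mem_unitaryGroup_iff]
  exact submatrix_mem_unitaryGroup _ hg

lemma prodState_mem_productOps {L : ℕ} (σ : Fin L → Matrix (Fin 2) (Fin 2) ℂ)
    (P : Finset (Fin L)) : prodState L σ ∈ productOps (Fin 2) ℂ P := by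
  refine ⟨fun u v => ∏ i : {i // i ∈ P}, σ i (u i) (v i),
    fun u v => ∏ i : {i // i ∉ P}, σ i (u i) (v i), ?_⟩
  ext f g
  rw [prodState, ← Fintype.prod_subtype_mul_prod_subtype (· ∈ P)]
  congr
  exact Subsingleton.elim _ _

lemma mem_qInterval {L a b : ℕ} {i : Fin L} : i ∈ qInterval L a b ↔ a ≤ i ∧ (i : ℕ) < b := by
  simp [qInterval]

/-- The support of the part of the first `s` layers of a brickwork circuit that is not a product
across the cut between the sites `m - 1` and `m`. -/
def lightCone (L m s : ℕ) : Finset (Fin L) :=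
  qInterval L (m + 1 - s) (m + s - 1)

lemma lightCone_mono {L m s t : ℕ} (h : s ≤ t) : lightCone L m s ⊆ lightCone L m t := by
  intro i
  simp only [lightCone, mem_qInterval]
  omega

/-- The gates of layer `s` start at sites of the parity of `m + 1 - s`, the left end of the
light cone, so each gate lies inside the light cone or misses it. -/
lemma brickGate_mem_localOps_or {L m s x : ℕ} (hx : x + 1 < L) (hs : 1 ≤ s)
    (hxs : (x + s) % 2 = 1) (hm : m % 2 = 0) (g : Matrix (Fin 2 × Fin 2) (Fin 2 × Fin 2) ℂ) :
    gateAt L ⟨x, by omega⟩ ⟨x + 1, hx⟩ g ∈ localOps (Fin 2) ℂ (lightCone L m s) ∨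
      gateAt L ⟨x, by omega⟩ ⟨x + 1, hx⟩ g ∈ productOps (Fin 2) ℂ (qInterval L 0 m) ∧
        ∀ N ∈ localOps (Fin 2) ℂ (lightCone L m s),
          Commute (gateAt L ⟨x, by omega⟩ ⟨x + 1, hx⟩ g) N := by
  have hgate := gateAt_mem_localOps (a := ⟨x, by omega⟩) (b := ⟨x + 1, hx⟩) (by simp) g
  by_cases hin : m + 1 - s ≤ x ∧ x + 1 < m + s - 1
  · refine .inl (localOps_mono ?_ hgate)
    intro i
    simp only [Finset.mem_insert, Finset.mem_singleton, lightCone, mem_qInterval, Fin.ext_iff]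
    omega
  · have hcut : x + 1 < m ∨ m ≤ x := by omega
    refine .inr ⟨?_, fun N hN => commute_of_mem_localOps_of_disjoint hgate hN ?_⟩
    · rcases hcut with hcut | hcut
      · refine localOps_le_productOps_of_subset ?_ hgate
        intro i
        simp only [Finset.mem_insert, Finset.mem_singleton, mem_qInterval, Fin.ext_iff]
        omega
      · refine localOps_le_productOps_of_disjoint ?_ hgate
        simp only [Finset.disjoint_left, Finset.mem_insert, Finset.mem_singleton, mem_qInterval,
          Fin.ext_iff]
        omega
    · simp only [Finset.disjoint_left, Finset.mem_insert, Finset.mem_singleton, lightCone,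
        mem_qInterval, Fin.ext_iff]
      omega

lemma IsBrickLayer.exists_lightCone_split {L p s m : ℕ} {V : QubitOp L}
    (hV : IsBrickLayer L p V) (hs : 1 ≤ s) (hps : (p + s) % 2 = 1) (hm : m % 2 = 0) :
    ∃ I O, V = I * O ∧ I ∈ unitaryGroup (QubitConf L) ℂ ∧
      I ∈ localOps (Fin 2) ℂ (lightCone L m s) ∧ O ∈ productOps (Fin 2) ℂ (qInterval L 0 m) ∧
      ∀ N ∈ localOps (Fin 2) ℂ (lightCone L m s), Commute O N := by
  classical
  obtain ⟨g, hg, rfl⟩ := hV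
  set gates := (List.range L).filterMap fun j =>
    if h : 2 * j + p + 1 < L then
      some (gateAt L ⟨2 * j + p, by omega⟩ ⟨2 * j + p + 1, h⟩ (g j))
    else none
  have hgates : ∀ G ∈ gates, G ∈ unitaryGroup (QubitConf L) ℂ ∧
      (G ∈ localOps (Fin 2) ℂ (lightCone L m s) ∨
        G ∈ productOps (Fin 2) ℂ (qInterval L 0 m) ∧
          ∀ N ∈ localOps (Fin 2) ℂ (lightCone L m s), Commute G N) := by
    intro G hG
    obtain ⟨j, -, hj⟩ := List.mem_filterMap.1 hG
    by_cases h : 2 * j + p + 1 < L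
    · obtain rfl : gateAt L _ _ (g j) = G := by simpa [h] using hj
      exact ⟨gateAt_mem_unitaryGroup (by simp) (hg j),
        brickGate_mem_localOps_or h hs (by omega) hm (g j)⟩
    · simp [h] at hj
  set inCone := fun G => decide (G ∈ localOps (Fin 2) ℂ (lightCone L m s))
  have hout : ∀ G ∈ gates.filter (fun G => !inCone G),
      G ∈ productOps (Fin 2) ℂ (qInterval L 0 m) ∧
        ∀ N ∈ localOps (Fin 2) ℂ (lightCone L m s), Commute G N := by
    intro G hG
    rw [List.mem_filter] at hG
    exact (hgates G hG.1).2.resolve_left (by simpa [inCone] using hG.2)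
  refine ⟨(gates.filter inCone).prod, (gates.filter fun G => !inCone G).prod, ?_, ?_, ?_, ?_, ?_⟩
  · refine (List.prod_filter_mul_prod_filter_not_of_commute _ _ fun a _ b hb ha hb' => ?_).symm
    exact ((hout b (List.mem_filter.2 ⟨hb, by simpa using hb'⟩)).2 a
      (by simpa [inCone] using ha)).symm
  · exact Submonoid.list_prod_mem _ fun G hG => (hgates G (List.mem_filter.1 hG).1).1
  · exact Submonoid.list_prod_mem _ fun G hG => by simpa [inCone] using (List.mem_filter.1 hG).2
  · exact Submonoid.list_prod_mem _ fun G hG => (hout G hG).1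
  · exact fun N hN => Commute.list_prod_left _ _ fun G hG => (hout G hG).2 N hN

lemma exists_lightCone_decomposition {L m : ℕ} (V : ℕ → QubitOp L) (T : ℕ)
    (hm : T ≠ 0 → m % 2 = 0) (hV : ∀ t, 1 ≤ t → t ≤ T → IsBrickLayer L ((t + 1) % 2) (V t)) :
    ∃ C W, ((List.range T).map fun t => V (T - t)).prod = C * W ∧
      C ∈ unitaryGroup (QubitConf L) ℂ ∧ C ∈ localOps (Fin 2) ℂ (lightCone L m T) ∧
      W ∈ productOps (Fin 2) ℂ (qInterval L 0 m) := by
  induction T with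
  | zero => exact ⟨1, 1, by simp, one_mem _, one_mem _, one_mem _⟩
  | succ T ih =>
    obtain ⟨C, W, hCW, hCu, hCl, hWp⟩ :=
      ih (fun _ => hm T.succ_ne_zero) fun t ht htT => hV t ht (by omega)
    obtain ⟨I, O, hIO, hIu, hIl, hOp, hOc⟩ :=
      IsBrickLayer.exists_lightCone_split (s := T + 1) (hV (T + 1) (by omega) le_rfl) (by omega)
        (by omega) (hm T.succ_ne_zero)
    have hCl' := localOps_mono (lightCone_mono T.le_succ) hCl
    refine ⟨I * C, O * W, ?_, mul_mem hIu hCu, mul_mem hIl hCl', mul_mem hOp hWp⟩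
    rw [List.prod_range_succ']
    simp only [Nat.sub_zero, Nat.succ_sub_succ]
    rw [hCW, hIO, mul_assoc, ← mul_assoc O, (hOc C hCl').eq, mul_assoc, mul_assoc]

lemma exists_even_cut {L ℓ b c : ℕ} (hbc : b ≤ c) (hB : 2 * ℓ - 1 ≤ c - b) :
    ∃ m, (ℓ ≠ 0 → m % 2 = 0) ∧ b ≤ m ∧ m ≤ c ∧ lightCone L m ℓ ⊆ qInterval L b c := by
  have hcone : ∀ {m}, b + ℓ ≤ m + 1 → m + ℓ ≤ c + 1 → lightCone L m ℓ ⊆ qInterval L b c :=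
    fun _ _ i => by simp only [lightCone, mem_qInterval]; omega
  rcases Nat.eq_zero_or_pos ℓ with rfl | hℓ
  · exact ⟨b, by simp, le_rfl, hbc, hcone (by omega) (by omega)⟩
  · exact ⟨b + ℓ - 1 + (b + ℓ - 1) % 2, fun _ => by omega, by omega, by omega,
      hcone (by omega) (by omega)⟩

end ManyBody

open ManyBody

theorem fdqc_moment_factorization_general
    (L ℓ : ℕ) (ρ : QubitOp L) (hρ : IsFDQCState L ℓ ρ)
    (a b c d : ℕ) (hbc : b ≤ c)
    (hB : 2 * ℓ - 1 ≤ c - b)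
    (n : ℕ) :
    ((reducedDM L (qInterval L a b ∪ qInterval L b c ∪ qInterval L c d) ρ) ^ n).trace *
        ((reducedDM L (qInterval L b c) ρ) ^ n).trace =
      ((reducedDM L (qInterval L a b ∪ qInterval L b c) ρ) ^ n).trace *
        ((reducedDM L (qInterval L b c ∪ qInterval L c d) ρ) ^ n).trace := by
  obtain ⟨U, σ, ⟨V, hV, rfl⟩, -, rfl⟩ := hρ
  obtain ⟨m, hm, hbm, hmc, hcone⟩ := exists_even_cut (L := L) hbc hB
  obtain ⟨C, W, hCW, hCu, hCl, hWp⟩ := exists_lightCone_decomposition V ℓ hm hV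
  have hτ : W * prodState L σ * Wᴴ ∈ productOps (Fin 2) ℂ (qInterval L 0 m) :=
    mul_mem (mul_mem hWp (prodState_mem_productOps σ _)) (conjTranspose_mem_productOps hWp)
  obtain ⟨F, G, hFG⟩ := exists_trace_pow_ptrace_eq_mul hτ n
  rw [hCW]
  refine markov_identity_of_factorization (P := qInterval L 0 m) (F := F) (G := G)
    (f := fun X => ((reducedDM L X (C * W * prodState L σ * (C * W)ᴴ)) ^ n).trace)
    (fun i => by simp only [mem_qInterval]; omega)
    (Finset.disjoint_left.2 fun i => by simp only [mem_qInterval]; omega) fun X hX => ?_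
  rw [reducedDM_eq_ptrace, ← hFG X, ← trace_pow_ptrace_unitary_conj
    (localOps_mono (hcone.trans hX) hCl) hCu (W * prodState L σ * Wᴴ), conjTranspose_mul]
  simp only [mul_assoc]

/-- For an FDQC state `ρ` of depth `ℓ` and consecutive disjoint intervals
`A = [a,b)`, `B = [b,c)`, `C = [c,d)` with `|B| ≥ 2ℓ - 1`, for every `n ≥ 1`:
`Tr((ρ_{A∪B∪C})ⁿ) · Tr((ρ_B)ⁿ) = Tr((ρ_{A∪B})ⁿ) · Tr((ρ_{B∪C})ⁿ)`. -/
theorem fdqc_moment_factorization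
    (L ℓ : ℕ) (ρ : QubitOp L) (hρ : IsFDQCState L ℓ ρ)
    (a b c d : ℕ) (hab : a ≤ b) (hbc : b ≤ c) (hcd : c ≤ d) (hdL : d ≤ L)
    (hB : 2 * ℓ - 1 ≤ c - b)
    (n : ℕ) (hn : 1 ≤ n) :
    ((reducedDM L (qInterval L a b ∪ qInterval L b c ∪ qInterval L c d) ρ) ^ n).trace *
        ((reducedDM L (qInterval L b c) ρ) ^ n).trace =
      ((reducedDM L (qInterval L a b ∪ qInterval L b c) ρ) ^ n).trace *
        ((reducedDM L (qInterval L b c ∪ qInterval L c d) ρ) ^ n).trace :=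
  fdqc_moment_factorization_general L ℓ ρ hρ a b c d hbc hB n
end

section
/- Let k ≥ 2 and R ≥ 2 be integers, set L = Rk, let 0 < δ ≤ 1, and let M be a real number with M ≥ max{ 2^{8k}, L² · 2^{4k+10} / (k² δ²) }. Let ε_1, …, ε_{R−1}, η_2, …, η_{R−1} be mutually independent real-valued random variables such that for every x > 0 and every admissible j, Pr(|ε_j| ≥ x) ≤ 2^{4k+3}/(x² M) and Pr(|η_j| ≥ x) ≤ 2^{2k+3}/(x² M). Define the random variable Q = ( ∏_{j=1}^{R−1} (1 + ε_j) ) / ( ∏_{j=2}^{R−1} (1 + η_j) ). Then Pr( |Q − 1| ≥ δ ) ≤ 2^{4k+11} L³ / (δ² k³ M). -/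
/-! Off the event that some `|ε_j|` or `|η_j|` reaches `t = δ / (8R)`, the Weierstrass
product inequality `1 - n t ≤ ∏ (1 + a_i)`, applied to `a` and to `-a`, traps numerator and
denominator of `Q` in `[1 - δ/8, 1 / (1 - δ/8)]`, which forces `|Q - 1| < δ`. A union bound over
the fewer than `2R` tail events, each of probability at most `2^{4k+3} (8R)² / (δ² M)`, gives
the claim. -/

open MeasureTheory ProbabilityTheory Finset

section Products

variable {ι : Type*} (s : Finset ι) {a : ι → ℝ} {t : ℝ}

theorem one_sub_card_mul_le_prod_one_add (ht : t ≤ 1) (ha : ∀ i ∈ s, |a i| ≤ t) :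
    1 - #s * t ≤ ∏ i ∈ s, (1 + a i) := by
  calc 1 - #s * t = 1 + #s * (-t) := by ring
    _ ≤ (1 + -t) ^ #s := one_add_mul_le_pow (by linarith) _
    _ = ∏ _i ∈ s, (1 - t) := by rw [prod_const, sub_eq_add_neg]
    _ ≤ ∏ i ∈ s, (1 + a i) :=
        prod_le_prod (fun _ _ => by linarith) fun i hi => by linarith [neg_abs_le (a i), ha i hi]

theorem prod_one_add_mul_one_sub_card_mul_le_one (ht : t ≤ 1) (ha : ∀ i ∈ s, |a i| ≤ t) :
    (∏ i ∈ s, (1 + a i)) * (1 - #s * t) ≤ 1 := by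
  have hneg : ∀ i ∈ s, |-a i| ≤ t := fun i hi => (abs_neg (a i)).symm ▸ ha i hi
  have hfactor : ∀ i ∈ s, 0 ≤ 1 + a i := fun i hi => by
    linarith [neg_abs_le (a i), ha i hi]
  calc (∏ i ∈ s, (1 + a i)) * (1 - #s * t)
      ≤ (∏ i ∈ s, (1 + a i)) * ∏ i ∈ s, (1 + -a i) :=
        mul_le_mul_of_nonneg_left (one_sub_card_mul_le_prod_one_add s ht hneg)
          (prod_nonneg hfactor)
    _ = ∏ i ∈ s, (1 - a i ^ 2) := by rw [← prod_mul_distrib]; congr! 1; ring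
    _ ≤ 1 := prod_le_one
        (fun i hi => sub_nonneg.mpr ((sq_le_one_iff_abs_le_one _).mpr ((ha i hi).trans ht)))
        fun i _ => by nlinarith [sq_nonneg (a i)]

theorem prod_one_add_bounds {u : ℝ} (ht : t ≤ 1) (hu : #s * t ≤ u)
    (ha : ∀ i ∈ s, |a i| ≤ t) :
    1 - u ≤ ∏ i ∈ s, (1 + a i) ∧ (∏ i ∈ s, (1 + a i)) * (1 - u) ≤ 1 := by
  have hlow := one_sub_card_mul_le_prod_one_add s ht ha
  refine ⟨by linarith, le_trans ?_ (prod_one_add_mul_one_sub_card_mul_le_one s ht ha)⟩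
  exact mul_le_mul_of_nonneg_left (by linarith)
    (prod_nonneg fun i hi => by linarith [neg_abs_le (a i), ha i hi])

end Products

theorem abs_div_sub_one_lt {x y u : ℝ} (hu0 : 0 < u) (hu1 : u ≤ 1 / 8)
    (hx : 1 - u ≤ x) (hx' : x * (1 - u) ≤ 1) (hy : 1 - u ≤ y) (hy' : y * (1 - u) ≤ 1) :
    |x / y - 1| < 8 * u := by
  have hy0 : 0 < y := by linarith
  have hgap : 1 < (1 - u) * (1 - u + 8 * u * (1 - u)) := by
    nlinarith [mul_pos (mul_pos hu0 hu0) hu0]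
  rw [div_sub_one hy0.ne', abs_div, abs_of_pos hy0, div_lt_iff₀ hy0, abs_lt]
  constructor <;> nlinarith

theorem abs_prod_div_prod_sub_one_lt {ι κ : Type*} {S : Finset ι} {T : Finset κ}
    {a : ι → ℝ} {b : κ → ℝ} {n : ℕ} {δ : ℝ} (hδ0 : 0 < δ) (hδ1 : δ ≤ 1)
    (hS : #S ≤ n) (hT : #T ≤ n)
    (ha : ∀ i ∈ S, |a i| ≤ δ / (8 * n)) (hb : ∀ i ∈ T, |b i| ≤ δ / (8 * n)) :
    |(∏ i ∈ S, (1 + a i)) / (∏ i ∈ T, (1 + b i)) - 1| < δ := by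
  have ht : δ / (8 * n) ≤ 1 := by
    rcases n.eq_zero_or_pos with rfl | hn
    · simp
    · have hn1 : (1 : ℝ) ≤ n := Nat.one_le_cast.mpr hn
      exact div_le_one_of_le₀ (by nlinarith) (by positivity)
  have hcard : ∀ c : ℕ, c ≤ n → c * (δ / (8 * n)) ≤ δ / 8 := fun c hc => by
    rcases n.eq_zero_or_pos with rfl | hn
    · simp [Nat.le_zero.mp hc]; positivity
    · calc c * (δ / (8 * n)) ≤ n * (δ / (8 * n)) := by gcongr
        _ = δ / 8 := by field_simp
  obtain ⟨hS₁, hS₂⟩ := prod_one_add_bounds S ht (hcard _ hS) ha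
  obtain ⟨hT₁, hT₂⟩ := prod_one_add_bounds T ht (hcard _ hT) hb
  simpa [mul_div_cancel₀] using
    abs_div_sub_one_lt (by positivity) (by linarith) hS₁ hS₂ hT₁ hT₂

theorem setOf_le_abs_prod_div_prod_sub_one_subset {Ω ι κ : Type*} {S : Finset ι}
    {T : Finset κ} (X : ι → Ω → ℝ) (Y : κ → Ω → ℝ) {n : ℕ} {δ : ℝ} (hδ0 : 0 < δ)
    (hδ1 : δ ≤ 1) (hS : #S ≤ n) (hT : #T ≤ n) :
    {ω | δ ≤ |(∏ i ∈ S, (1 + X i ω)) / (∏ i ∈ T, (1 + Y i ω)) - 1|}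
      ⊆ (⋃ i ∈ S, {ω | δ / (8 * n) ≤ |X i ω|})
        ∪ ⋃ i ∈ T, {ω | δ / (8 * n) ≤ |Y i ω|} := by
  intro ω hω
  by_contra hc
  simp only [Set.mem_union, Set.mem_iUnion, Set.mem_ofPred_eq, not_or, not_exists,
    not_le] at hc
  exact (abs_prod_div_prod_sub_one_lt hδ0 hδ1 hS hT (fun i hi => (hc.1 i hi).le)
    (fun i hi => (hc.2 i hi).le)).not_ge hω

theorem measure_biUnion_le_card_mul_ofReal {α ι : Type*} [MeasurableSpace α] (μ : Measure α)
    (s : Finset ι) (E : ι → Set α) {c : ℝ} (h : ∀ i ∈ s, μ (E i) ≤ ENNReal.ofReal c) :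
    μ (⋃ i ∈ s, E i) ≤ ENNReal.ofReal (#s * c) := by
  calc μ (⋃ i ∈ s, E i) ≤ ∑ i ∈ s, μ (E i) := measure_biUnion_finset_le s E
    _ ≤ #s • ENNReal.ofReal c := sum_le_card_nsmul s _ _ h
    _ = ENNReal.ofReal (#s * c) := by
        rw [nsmul_eq_mul, ENNReal.ofReal_mul (by positivity), ENNReal.ofReal_natCast]

theorem chebyshev_union_sum_le {k R : ℕ} (hk : 1 ≤ k) (hR : 2 ≤ R) {δ M : ℝ} (hδ : 0 < δ)
    (hM : 0 < M) :
    ((R - 1 : ℕ) : ℝ) * ((2 : ℝ) ^ (4 * k + 3) / ((δ / (8 * R)) ^ 2 * M))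
      + ((R - 2 : ℕ) : ℝ) * ((2 : ℝ) ^ (2 * k + 3) / ((δ / (8 * R)) ^ 2 * M))
      ≤ (2 : ℝ) ^ (4 * k + 11) * ((R : ℝ) * k) ^ 3 / (δ ^ 2 * (k : ℝ) ^ 3 * M) := by
  have hk0 : (0 : ℝ) < k := by positivity
  have hR2 : (2 : ℝ) ≤ R := by exact_mod_cast hR
  have hpow : (2 : ℝ) ^ (2 * k + 3) ≤ 2 ^ (4 * k + 3) :=
    pow_le_pow_right₀ (by norm_num) (by omega)
  have h11 : (2 : ℝ) ^ (4 * k + 11) = 2 ^ (4 * k + 3) * 256 := by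
    rw [show 4 * k + 11 = 4 * k + 3 + 8 by ring, pow_add]; norm_num
  rw [h11, Nat.cast_sub (by omega), Nat.cast_sub hR, Nat.cast_one, Nat.cast_ofNat]
  field_simp
  nlinarith [mul_le_mul_of_nonneg_left hpow (by linarith : (0 : ℝ) ≤ R - 2),
    pow_pos (show (0 : ℝ) < 2 by norm_num) (4 * k + 3)]

theorem purity_estimator_tail_bound_general
    {Ω : Type*} [MeasurableSpace Ω] (μ : Measure Ω)
    (k R L : ℕ) (hk : 2 ≤ k) (hR : 2 ≤ R) (hL : L = R * k)
    (δ M : ℝ) (hδ0 : 0 < δ) (hδ1 : δ ≤ 1)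
    (hM : max ((2:ℝ) ^ (8 * k)) ((L:ℝ) ^ 2 * (2:ℝ) ^ (4 * k + 10) / ((k:ℝ) ^ 2 * δ ^ 2)) ≤ M)
    (e h : ℕ → Ω → ℝ)
    (htaile : ∀ j, 1 ≤ j → j ≤ R - 1 → ∀ x : ℝ, 0 < x →
      μ {ω | x ≤ |e j ω|} ≤ ENNReal.ofReal ((2:ℝ) ^ (4 * k + 3) / (x ^ 2 * M)))
    (htailh : ∀ j, 2 ≤ j → j ≤ R - 1 → ∀ x : ℝ, 0 < x →
      μ {ω | x ≤ |h j ω|} ≤ ENNReal.ofReal ((2:ℝ) ^ (2 * k + 3) / (x ^ 2 * M))) :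
    μ {ω | δ ≤ |(∏ j ∈ Finset.Icc 1 (R - 1), (1 + e j ω)) /
                  (∏ j ∈ Finset.Icc 2 (R - 1), (1 + h j ω)) - 1|}
      ≤ ENNReal.ofReal ((2:ℝ) ^ (4 * k + 11) * (L:ℝ) ^ 3 / (δ ^ 2 * (k:ℝ) ^ 3 * M)) := by
  subst hL
  have hM0 : 0 < M := lt_of_lt_of_le (by positivity) ((le_max_left _ _).trans hM)
  have ht0 : 0 < δ / (8 * R) := by positivity
  have hcard : ∀ i, #(Icc i (R - 1)) ≤ R := fun i => by simp only [Nat.card_Icc]; omega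
  calc _ ≤ _ := measure_mono (setOf_le_abs_prod_div_prod_sub_one_subset e h hδ0 hδ1
        (hcard 1) (hcard 2))
    _ ≤ _ := measure_union_le _ _
    _ ≤ _ := add_le_add
        (measure_biUnion_le_card_mul_ofReal μ _ _ fun j hj =>
          htaile j (mem_Icc.mp hj).1 (mem_Icc.mp hj).2 _ ht0)
        (measure_biUnion_le_card_mul_ofReal μ _ _ fun j hj =>
          htailh j (mem_Icc.mp hj).1 (mem_Icc.mp hj).2 _ ht0)
    _ = _ := (ENNReal.ofReal_add (by positivity) (by positivity)).symm
    _ ≤ _ := by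
      apply ENNReal.ofReal_le_ofReal
      convert chebyshev_union_sum_le (k := k) (by omega) hR hδ0 hM0 using 3 <;>
        simp [Nat.sub_sub]

/-- Tail bound for the ratio-of-products purity estimator built from
independent local relative errors with Chebyshev-type tails. -/
theorem purity_estimator_tail_bound
    {Ω : Type*} [MeasurableSpace Ω] (μ : Measure Ω) [IsProbabilityMeasure μ]
    (k R L : ℕ) (hk : 2 ≤ k) (hR : 2 ≤ R) (hL : L = R * k)
    (δ M : ℝ) (hδ0 : 0 < δ) (hδ1 : δ ≤ 1)
    (hM : max ((2:ℝ) ^ (8 * k)) ((L:ℝ) ^ 2 * (2:ℝ) ^ (4 * k + 10) / ((k:ℝ) ^ 2 * δ ^ 2)) ≤ M)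
    (e h : ℕ → Ω → ℝ)
    (hme : ∀ j, Measurable (e j)) (hmh : ∀ j, Measurable (h j))
    (hind : iIndepFun
      (Sum.elim (fun j : {j : ℕ // 1 ≤ j ∧ j ≤ R - 1} => e j.1)
                (fun j : {j : ℕ // 2 ≤ j ∧ j ≤ R - 1} => h j.1)) μ)
    (htaile : ∀ j, 1 ≤ j → j ≤ R - 1 → ∀ x : ℝ, 0 < x →
      μ {ω | x ≤ |e j ω|} ≤ ENNReal.ofReal ((2:ℝ) ^ (4 * k + 3) / (x ^ 2 * M)))
    (htailh : ∀ j, 2 ≤ j → j ≤ R - 1 → ∀ x : ℝ, 0 < x →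
      μ {ω | x ≤ |h j ω|} ≤ ENNReal.ofReal ((2:ℝ) ^ (2 * k + 3) / (x ^ 2 * M))) :
    μ {ω | δ ≤ |(∏ j ∈ Finset.Icc 1 (R - 1), (1 + e j ω)) /
                  (∏ j ∈ Finset.Icc 2 (R - 1), (1 + h j ω)) - 1|}
      ≤ ENNReal.ofReal ((2:ℝ) ^ (4 * k + 11) * (L:ℝ) ^ 3 / (δ ^ 2 * (k:ℝ) ^ 3 * M)) :=
  purity_estimator_tail_bound_general μ k R L hk hR hL δ M hδ0 hδ1 hM e h htaile htailh
end

section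
/- Let k ≥ 1 be an integer and let p, P_A, P_B, e_0, e_A, e_B be real numbers with |p| ≤ 1, P_A ≥ 2^{−2k}, P_B ≥ 2^{−2k}, and ε := 2^{4k} · max{ |e_0|, |e_A|, |e_B| } ≤ 1. Then | (p + e_0) / ( P_A (1 + e_A) · P_B (1 + e_B) ) − p / (P_A P_B) | ≤ 16 ε. -/
/-!
Clearing denominators, the error equals `(e₀ - p (e_A + e_B + e_A e_B)) / (P_A P_B (1 + e_A)(1 + e_B))`.
With every error at most `δ ≤ 1/2` in absolute value and `|p| ≤ 1`, the numerator is at most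
`3δ + δ² ≤ 4δ` and `(1 + e_A)(1 + e_B) ≥ 1/4`, so the error is at most `16 δ / (P_A P_B)`.
Here `δ ≤ 2^{-4k}` and `P_A P_B ≥ 2^{-4k}`, which gives `16 · 2^{4k} δ`.
-/

lemma div_perturbed_sub_div {p e₀ eA eB PA PB : ℝ} (hPA : PA ≠ 0) (hPB : PB ≠ 0)
    (hA : 1 + eA ≠ 0) (hB : 1 + eB ≠ 0) :
    (p + e₀) / (PA * (1 + eA) * (PB * (1 + eB))) - p / (PA * PB)
      = (e₀ - p * (eA + eB + eA * eB)) / (PA * PB * ((1 + eA) * (1 + eB))) := by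
  field_simp
  ring

lemma abs_perturbed_numerator_le {p e₀ eA eB δ : ℝ} (hp : |p| ≤ 1) (h₀ : |e₀| ≤ δ)
    (hA : |eA| ≤ δ) (hB : |eB| ≤ δ) (hδ : δ ≤ 1) :
    |e₀ - p * (eA + eB + eA * eB)| ≤ 4 * δ := by
  have hsum : |eA + eB + eA * eB| ≤ 3 * δ := by
    calc |eA + eB + eA * eB| ≤ |eA| + |eB| + |eA| * |eB| := by
          rw [← abs_mul]; exact abs_add_three _ _ _
      _ ≤ δ + δ + δ * 1 := by
          have := mul_le_mul hA (hB.trans hδ) (abs_nonneg _) ((abs_nonneg _).trans hA)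
          linarith
      _ = 3 * δ := by ring
  calc |e₀ - p * (eA + eB + eA * eB)| ≤ |e₀| + |p| * |eA + eB + eA * eB| := by
        rw [← abs_mul]; exact abs_sub _ _
    _ ≤ δ + 1 * (3 * δ) := by gcongr
    _ = 4 * δ := by ring

lemma quarter_le_one_add_mul_one_add {eA eB : ℝ} (hA : |eA| ≤ 1 / 2) (hB : |eB| ≤ 1 / 2) :
    1 / 4 ≤ (1 + eA) * (1 + eB) := by
  have hA' := neg_abs_le eA
  have hB' := neg_abs_le eB
  calc (1 / 4 : ℝ) = (1 / 2) * (1 / 2) := by norm_num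
    _ ≤ (1 + eA) * (1 + eB) := by gcongr <;> linarith

lemma abs_div_perturbed_sub_div_le {p e₀ eA eB PA PB δ : ℝ} (hPA : 0 < PA) (hPB : 0 < PB)
    (hp : |p| ≤ 1) (h₀ : |e₀| ≤ δ) (hA : |eA| ≤ δ) (hB : |eB| ≤ δ) (hδ : δ ≤ 1 / 2) :
    |(p + e₀) / (PA * (1 + eA) * (PB * (1 + eB))) - p / (PA * PB)| ≤ 16 * δ / (PA * PB) := by
  have hden := quarter_le_one_add_mul_one_add (hA.trans hδ) (hB.trans hδ)
  have hA₀ : 1 + eA ≠ 0 := by linarith [neg_abs_le eA]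
  have hB₀ : 1 + eB ≠ 0 := by linarith [neg_abs_le eB]
  rw [div_perturbed_sub_div hPA.ne' hPB.ne' hA₀ hB₀, abs_div,
    abs_of_pos (by positivity : 0 < PA * PB * ((1 + eA) * (1 + eB)))]
  calc |e₀ - p * (eA + eB + eA * eB)| / (PA * PB * ((1 + eA) * (1 + eB)))
      ≤ 4 * δ / (PA * PB * (1 / 4)) := by
        have hnum := abs_perturbed_numerator_le hp h₀ hA hB (by linarith)
        gcongr
        exact (abs_nonneg _).trans hnum
    _ = 16 * δ / (PA * PB) := by field_simp; ring

/-- Deterministic propagation of errors in the normalized PT-moment estimator: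
with `|p| ≤ 1`, `P_A, P_B ≥ 2^{-2k}` and `ε := 2^{4k}·max{|e₀|,|e_A|,|e_B|} ≤ 1`, one has
`| (p+e₀)/(P_A(1+e_A)·P_B(1+e_B)) - p/(P_A P_B) | ≤ 16 ε`. -/
theorem normalized_pt_estimator_error_bound
    (k : ℕ) (hk : 1 ≤ k) (p PA PB e0 eA eB : ℝ)
    (hp : |p| ≤ 1)
    (hPA : ((2:ℝ) ^ (2 * k))⁻¹ ≤ PA) (hPB : ((2:ℝ) ^ (2 * k))⁻¹ ≤ PB)
    (hε : (2:ℝ) ^ (4 * k) * max |e0| (max |eA| |eB|) ≤ 1) :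
    |(p + e0) / (PA * (1 + eA) * (PB * (1 + eB))) - p / (PA * PB)|
      ≤ 16 * ((2:ℝ) ^ (4 * k) * max |e0| (max |eA| |eB|)) := by
  set δ := max |e0| (max |eA| |eB|)
  have hδ : δ ≤ ((2:ℝ) ^ (4 * k))⁻¹ := by
    simpa using (le_inv_mul_iff₀ (by positivity)).mpr hε
  have hsmall : ((2:ℝ) ^ (4 * k))⁻¹ ≤ 1 / 2 := by
    rw [one_div]
    exact inv_anti₀ two_pos (le_self_pow₀ one_le_two (by omega))
  have hPA₀ : 0 < PA := lt_of_lt_of_le (by positivity) hPA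
  have hPB₀ : 0 < PB := lt_of_lt_of_le (by positivity) hPB
  have hPAB : ((2:ℝ) ^ (4 * k))⁻¹ ≤ PA * PB := by
    calc ((2:ℝ) ^ (4 * k))⁻¹ = ((2:ℝ) ^ (2 * k))⁻¹ * ((2:ℝ) ^ (2 * k))⁻¹ := by
          rw [← mul_inv, ← pow_add]; ring_nf
      _ ≤ PA * PB := by gcongr
  calc _ ≤ 16 * δ / (PA * PB) :=
        abs_div_perturbed_sub_div_le hPA₀ hPB₀ hp (le_max_left _ _)
          ((le_max_left _ _).trans (le_max_right _ _)) ((le_max_right _ _).trans (le_max_right _ _))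
          (hδ.trans hsmall)
    _ ≤ 16 * δ / ((2:ℝ) ^ (4 * k))⁻¹ := by gcongr
    _ = 16 * ((2:ℝ) ^ (4 * k) * δ) := by rw [div_inv_eq_mul]; ring
end

section
/- Let k ≥ 1 be an integer and let M be a real number with M ≥ 3 · 2^{8k}. Let ρ_{AB} be a density matrix on a complex Hilbert space of dimension 2^{2k}, and let ρ_A, ρ_B be density matrices on complex Hilbert spaces of dimension 2^{k}. Let X, Y_A, Y_B be real-valued random variables with E[Y_A] = Tr(ρ_A³), E[Y_B] = Tr(ρ_B³), E[X] = p for some real number p, and with variances bounded by Var[X] ≤ 9 · 2^{2k} Tr(ρ_{AB}⁴)/M + 18 · 2^{6k} Tr(ρ_{AB}²)/(M−1)² + 6 · 2^{12k}/(M−2)³, Var[Y_A] ≤ 9 · 2^{k} Tr(ρ_A⁴)/M + 18 · 2^{3k} Tr(ρ_A²)/(M−1)² + 6 · 2^{6k}/(M−2)³, and the analogous bound for Y_B with ρ_B. Then for every α > 0: Pr( |Y_A/Tr(ρ_A³) − 1| ≥ α ) ≤ 27 · 2^{3k}/(α² M), Pr( |Y_B/Tr(ρ_B³) − 1| ≥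 α ) ≤ 27 · 2^{3k}/(α² M), and Pr( |X − p| ≥ α ) ≤ 27 · 2^{2k}/(α² M). -/
/-!
Each bound is Chebyshev's inequality applied to the given variance bound. For a density matrix
with eigenvalues `λᵢ ∈ [0, 1]` summing to one, `Tr ρ² ≤ 1`, `Tr ρ⁴ ≤ Tr ρ³ ≤ 1`, and Jensen gives
`Tr ρ³ ≥ 1 / D²` in dimension `D`. Once `M ≥ 3 D⁴`, the two finite-sample terms
`18 D³ Tr ρ² / (M - 1)²` and `6 D⁶ / (M - 2)³` are each at most `9 / (D M)`, so the whole bound is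
at most `27 D / M`, and also at most `27 D³ (Tr ρ³)² / M`; the latter, divided by `(α Tr ρ³)²`,
gives the relative deviation bound for the third-moment estimators.
-/

open MeasureTheory ProbabilityTheory
open scoped ComplexOrder
open Matrix Finset

theorem Matrix.IsHermitian.trace_pow_eq_sum_eigenvalues_pow {𝕜 n : Type*} [RCLike 𝕜] [Fintype n]
    [DecidableEq n] {A : Matrix n n 𝕜} (hA : A.IsHermitian) (m : ℕ) :
    (A ^ m).trace = ∑ i, (hA.eigenvalues i : 𝕜) ^ m := by
  conv_lhs => rw [hA.spectral_theorem]
  rw [← map_pow, Unitary.conjStarAlgAut_apply, trace_mul_cycle, Unitary.coe_star_mul_self, one_mul,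
    diagonal_pow, trace_diagonal]
  rfl

namespace Matrix.PosSemidef

variable {d : Type*} [Fintype d] [DecidableEq d] {ρ : Matrix d d ℂ}

theorem re_trace_pow_eq_sum_eigenvalues_pow (hρ : ρ.PosSemidef) (m : ℕ) :
    ((ρ ^ m).trace).re = ∑ i, hρ.1.eigenvalues i ^ m := by
  simp [hρ.1.trace_pow_eq_sum_eigenvalues_pow m, Complex.re_sum, ← Complex.ofReal_pow]

theorem sum_eigenvalues_eq_one (hρ : ρ.PosSemidef) (htr : ρ.trace = 1) :
    ∑ i, hρ.1.eigenvalues i = 1 := by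
  simpa [htr] using (hρ.re_trace_pow_eq_sum_eigenvalues_pow 1).symm

theorem eigenvalues_le_one (hρ : ρ.PosSemidef) (htr : ρ.trace = 1) (i : d) :
    hρ.1.eigenvalues i ≤ 1 :=
  hρ.sum_eigenvalues_eq_one htr ▸
    single_le_sum (fun j _ => hρ.eigenvalues_nonneg j) (mem_univ i)

theorem re_trace_pow_le_re_trace_pow (hρ : ρ.PosSemidef) (htr : ρ.trace = 1) {m n : ℕ}
    (hmn : m ≤ n) : ((ρ ^ n).trace).re ≤ ((ρ ^ m).trace).re := by
  simp only [hρ.re_trace_pow_eq_sum_eigenvalues_pow]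
  exact sum_le_sum fun i _ =>
    pow_le_pow_of_le_one (hρ.eigenvalues_nonneg i) (hρ.eigenvalues_le_one htr i) hmn

theorem re_trace_pow_le_one (hρ : ρ.PosSemidef) (htr : ρ.trace = 1) {n : ℕ} (hn : 1 ≤ n) :
    ((ρ ^ n).trace).re ≤ 1 := by
  simpa [htr] using hρ.re_trace_pow_le_re_trace_pow htr hn

theorem inv_card_pow_le_re_trace_pow_succ (hρ : ρ.PosSemidef) (htr : ρ.trace = 1) (n : ℕ) :
    1 / (Fintype.card d : ℝ) ^ n ≤ ((ρ ^ (n + 1)).trace).re := by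
  simpa [hρ.sum_eigenvalues_eq_one htr, hρ.re_trace_pow_eq_sum_eigenvalues_pow] using
    pow_sum_div_card_le_sum_pow (s := univ) (fun i _ => hρ.eigenvalues_nonneg i) n

end Matrix.PosSemidef

theorem two_mul_pow_four_mul_le_sq_sub_one {D M : ℝ} (hD : 2 ≤ D) (hM : 3 * D ^ 4 ≤ M) :
    2 * D ^ 4 * M ≤ (M - 1) ^ 2 := by
  have hD4 : 16 ≤ D ^ 4 := by
    calc (16 : ℝ) = 2 ^ 4 := by norm_num
      _ ≤ D ^ 4 := pow_le_pow_left₀ (by norm_num) hD 4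
  nlinarith

theorem two_mul_pow_seven_mul_le_three_mul_cube_sub_two {D M : ℝ} (hD : 2 ≤ D)
    (hM : 3 * D ^ 4 ≤ M) :
    2 * D ^ 7 * M ≤ 3 * (M - 2) ^ 3 := by
  have hD8 : 2 * D ^ 7 ≤ D ^ 8 := by rw [pow_succ D 7, mul_comm 2]; gcongr
  have hM48 : 48 ≤ M := by nlinarith [pow_le_pow_left₀ (by norm_num : (0:ℝ) ≤ 2) hD 4]
  have hMsq : 18 * D ^ 7 ≤ M ^ 2 := by nlinarith [pow_le_pow_left₀ (by positivity) hM 2]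
  have hcube : (M / 2) ^ 3 ≤ (M - 2) ^ 3 := pow_le_pow_left₀ (by linarith) (by linarith) 3
  nlinarith

/-- The variance bound for the estimator of a third moment from `M` randomized measurements of a
`D`-dimensional state `ρ`, with `m₂ = Tr ρ²` and `m₄ = Tr ρ⁴`. -/
noncomputable def momentVarianceBound (D m₂ m₄ M : ℝ) : ℝ :=
  9 * D * m₄ / M + 18 * D ^ 3 * m₂ / (M - 1) ^ 2 + 6 * D ^ 6 / (M - 2) ^ 3

namespace momentVarianceBound

variable {D M m₂ m₄ : ℝ}

theorem higher_order_terms_le (hD : 2 ≤ D) (hM : 3 * D ^ 4 ≤ M) (hm₂ : m₂ ≤ 1) :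
    18 * D ^ 3 * m₂ / (M - 1) ^ 2 + 6 * D ^ 6 / (M - 2) ^ 3 ≤ 18 / (D * M) := by
  have hD0 : 0 < D := by linarith
  have hM0 : 0 < M := by nlinarith [pow_pos hD0 4]
  have hM2 : 0 < M - 2 := by nlinarith [pow_le_pow_left₀ (by norm_num : (0:ℝ) ≤ 2) hD 4]
  have hpurity : 18 * D ^ 3 * m₂ / (M - 1) ^ 2 ≤ 9 / (D * M) := by
    rw [div_le_div_iff₀ (by nlinarith) (by positivity)]
    have h := mul_le_mul_of_nonneg_left hm₂ (by positivity : (0:ℝ) ≤ 18 * D ^ 4 * M)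
    nlinarith [two_mul_pow_four_mul_le_sq_sub_one hD hM]
  have hcube : 6 * D ^ 6 / (M - 2) ^ 3 ≤ 9 / (D * M) := by
    rw [div_le_div_iff₀ (by positivity) (by positivity)]
    nlinarith [two_mul_pow_seven_mul_le_three_mul_cube_sub_two hD hM]
  linarith [show 18 / (D * M) = 9 / (D * M) + 9 / (D * M) by ring]

theorem le_of_le_one (hD : 2 ≤ D) (hM : 3 * D ^ 4 ≤ M)
    (hm₂ : m₂ ≤ 1) (hm₄ : m₄ ≤ 1) : momentVarianceBound D m₂ m₄ M ≤ 27 * D / M := by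
  have hD0 : 0 < D := by linarith
  have hM0 : 0 < M := by nlinarith [pow_pos hD0 4]
  have hmixed : 9 * D * m₄ / M ≤ 9 * D / M :=
    div_le_div_of_nonneg_right (by nlinarith) hM0.le
  have htail : 18 / (D * M) ≤ 18 * D / M := by
    rw [div_le_div_iff₀ (by positivity) hM0]
    nlinarith [mul_le_mul_of_nonneg_right (by nlinarith : 1 ≤ D * D) hM0.le]
  have hhigher := higher_order_terms_le hD hM hm₂
  rw [momentVarianceBound]
  linarith [show 27 * D / M = 9 * D / M + 18 * D / M by ring]

theorem le_of_inv_sq_le {m₃ : ℝ} (hD : 2 ≤ D)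
    (hM : 3 * D ^ 4 ≤ M) (hm₂ : m₂ ≤ 1) (hm₄ : m₄ ≤ m₃) (hm₃ : 1 / D ^ 2 ≤ m₃) :
    momentVarianceBound D m₂ m₄ M ≤ 27 * D ^ 3 * m₃ ^ 2 / M := by
  have hD0 : 0 < D := by linarith
  have hM0 : 0 < M := by nlinarith [pow_pos hD0 4]
  have hDm₃ : 1 ≤ D ^ 2 * m₃ := by rwa [div_le_iff₀' (by positivity)] at hm₃
  have hm₃0 : 0 < m₃ := lt_of_lt_of_le (by positivity) hm₃
  have hmixed : 9 * D * m₄ / M ≤ 9 * D ^ 3 * m₃ ^ 2 / M := by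
    refine div_le_div_of_nonneg_right ?_ hM0.le
    nlinarith [mul_le_mul_of_nonneg_left hDm₃ (by positivity : 0 ≤ D * m₃)]
  have htail : 18 / (D * M) ≤ 18 * D ^ 3 * m₃ ^ 2 / M := by
    rw [div_le_div_iff₀ (by positivity) hM0]
    nlinarith [mul_le_mul hDm₃ hDm₃ zero_le_one (by positivity), mul_pos hD0 hM0]
  have hhigher := higher_order_terms_le hD hM hm₂
  rw [momentVarianceBound]
  linarith [show 27 * D ^ 3 * m₃ ^ 2 / M = 9 * D ^ 3 * m₃ ^ 2 / M + 18 * D ^ 3 * m₃ ^ 2 / M by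
    ring]

end momentVarianceBound

section Chebyshev

variable {Ω : Type*} [MeasurableSpace Ω] {μ : Measure Ω} {X : Ω → ℝ} {V : ℝ}

theorem meas_ge_le_ofReal_div_sq (hX : AEStronglyMeasurable X μ) {c : ℝ} (hc : 0 < c)
    (hV : evariance X μ ≤ ENNReal.ofReal V) :
    μ {ω | c ≤ |X ω - μ[X]|} ≤ ENNReal.ofReal (V / c ^ 2) := by
  have h := meas_ge_le_evariance_div_sq hX (c := c.toNNReal) (by simpa using hc)
  rw [Real.coe_toNNReal c hc.le] at h
  refine h.trans ?_
  rw [ENNReal.ofReal_div_of_pos (by positivity), ENNReal.ofReal_pow hc.le]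
  exact ENNReal.div_le_div_right hV _

theorem meas_div_sub_one_ge_le_ofReal_div_sq (hX : AEStronglyMeasurable X μ) {t α : ℝ}
    (ht : 0 < t) (hα : 0 < α) (hmean : μ[X] = t) (hV : evariance X μ ≤ ENNReal.ofReal V) :
    μ {ω | α ≤ |X ω / t - 1|} ≤ ENNReal.ofReal (V / (α * t) ^ 2) := by
  have hset : {ω | α ≤ |X ω / t - 1|} = {ω | α * t ≤ |X ω - μ[X]|} := by
    ext ω
    rw [Set.mem_ofPred_eq, Set.mem_ofPred_eq, hmean, ← le_div_iff₀ ht, ← abs_of_pos ht, ← abs_div,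
      abs_of_pos ht, sub_div, div_self ht.ne']
  rw [hset]
  exact meas_ge_le_ofReal_div_sq hX (by positivity) hV

end Chebyshev

section DensityMatrix

variable {Ω : Type*} [MeasurableSpace Ω] {μ : Measure Ω} {d : Type*} [Fintype d] [DecidableEq d]
  {ρ : Matrix d d ℂ} {D M α : ℝ}

theorem meas_ge_le_of_evariance_le_momentVarianceBound (hρ : ρ.PosSemidef) (htr : ρ.trace = 1)
    (hD : 2 ≤ D) (hM : 3 * D ^ 4 ≤ M) {X : Ω → ℝ} (hX : Measurable X) {p : ℝ} (hmean : μ[X] = p)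
    (hV : evariance X μ ≤
      ENNReal.ofReal (momentVarianceBound D ((ρ ^ 2).trace).re ((ρ ^ 4).trace).re M))
    (hα : 0 < α) :
    μ {ω | α ≤ |X ω - p|} ≤ ENNReal.ofReal (27 * D / (α ^ 2 * M)) := by
  have hbound := momentVarianceBound.le_of_le_one hD hM
    (hρ.re_trace_pow_le_one htr (n := 2) (by norm_num))
    (hρ.re_trace_pow_le_one htr (n := 4) (by norm_num))
  rw [← hmean]
  refine (meas_ge_le_ofReal_div_sq hX.aestronglyMeasurable hα hV).trans
    (ENNReal.ofReal_le_ofReal ?_)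
  calc _ ≤ 27 * D / M / α ^ 2 := div_le_div_of_nonneg_right hbound (by positivity)
    _ = 27 * D / (α ^ 2 * M) := by rw [div_div, mul_comm M]

theorem meas_div_re_trace_pow_three_sub_one_ge_le_of_evariance_le_momentVarianceBound
    (hρ : ρ.PosSemidef) (htr : ρ.trace = 1) (hD : 2 ≤ D) (hdim : (Fintype.card d : ℝ) ≤ D)
    (hM : 3 * D ^ 4 ≤ M) {Y : Ω → ℝ} (hY : Measurable Y) (hmean : μ[Y] = ((ρ ^ 3).trace).re)
    (hV : evariance Y μ ≤
      ENNReal.ofReal (momentVarianceBound D ((ρ ^ 2).trace).re ((ρ ^ 4).trace).re M))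
    (hα : 0 < α) :
    μ {ω | α ≤ |Y ω / ((ρ ^ 3).trace).re - 1|} ≤ ENNReal.ofReal (27 * D ^ 3 / (α ^ 2 * M)) := by
  have : Nonempty d := by
    by_contra h
    rw [not_nonempty_iff] at h
    simp at htr
  have hm₃ : 1 / D ^ 2 ≤ ((ρ ^ 3).trace).re :=
    le_trans (by gcongr) (hρ.inv_card_pow_le_re_trace_pow_succ htr 2)
  set t := ((ρ ^ 3).trace).re
  have ht : 0 < t := lt_of_lt_of_le (by positivity) hm₃
  have hbound := momentVarianceBound.le_of_inv_sq_le hD hM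
    (hρ.re_trace_pow_le_one htr (n := 2) (by norm_num))
    (hρ.re_trace_pow_le_re_trace_pow htr (m := 3) (n := 4) (by norm_num))
    hm₃
  refine (meas_div_sub_one_ge_le_ofReal_div_sq hY.aestronglyMeasurable ht hα hmean hV).trans
    (ENNReal.ofReal_le_ofReal ?_)
  calc _ ≤ 27 * D ^ 3 * t ^ 2 / M / (α * t) ^ 2 :=
        div_le_div_of_nonneg_right hbound (by positivity)
    _ = 27 * D ^ 3 / (α ^ 2 * M) := by field_simp

end DensityMatrix

theorem chebyshev_pt_moment_estimators_general
    {Ω : Type*} [MeasurableSpace Ω] (μ : Measure Ω)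
    (k : ℕ) (hk : 1 ≤ k) (M : ℝ) (hM : 3 * (2:ℝ) ^ (8 * k) ≤ M)
    (ρAB : Matrix (Fin (2 ^ (2 * k))) (Fin (2 ^ (2 * k))) ℂ)
    (hρAB : ρAB.PosSemidef) (htrAB : ρAB.trace = 1)
    (ρA ρB : Matrix (Fin (2 ^ k)) (Fin (2 ^ k)) ℂ)
    (hρA : ρA.PosSemidef) (htrA : ρA.trace = 1)
    (hρB : ρB.PosSemidef) (htrB : ρB.trace = 1)
    (X YA YB : Ω → ℝ) (hXm : Measurable X) (hYAm : Measurable YA) (hYBm : Measurable YB)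
    (p : ℝ) (hmX : ∫ ω, X ω ∂μ = p)
    (hmA : ∫ ω, YA ω ∂μ = ((ρA ^ 3).trace).re)
    (hmB : ∫ ω, YB ω ∂μ = ((ρB ^ 3).trace).re)
    (hvX : evariance X μ ≤ ENNReal.ofReal
      (9 * (2:ℝ) ^ (2 * k) * ((ρAB ^ 4).trace).re / M
        + 18 * (2:ℝ) ^ (6 * k) * ((ρAB ^ 2).trace).re / (M - 1) ^ 2
        + 6 * (2:ℝ) ^ (12 * k) / (M - 2) ^ 3))
    (hvA : evariance YA μ ≤ ENNReal.ofReal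
      (9 * (2:ℝ) ^ k * ((ρA ^ 4).trace).re / M
        + 18 * (2:ℝ) ^ (3 * k) * ((ρA ^ 2).trace).re / (M - 1) ^ 2
        + 6 * (2:ℝ) ^ (6 * k) / (M - 2) ^ 3))
    (hvB : evariance YB μ ≤ ENNReal.ofReal
      (9 * (2:ℝ) ^ k * ((ρB ^ 4).trace).re / M
        + 18 * (2:ℝ) ^ (3 * k) * ((ρB ^ 2).trace).re / (M - 1) ^ 2
        + 6 * (2:ℝ) ^ (6 * k) / (M - 2) ^ 3)) :
    ∀ α : ℝ, 0 < α →
      μ {ω | α ≤ |YA ω / ((ρA ^ 3).trace).re - 1|}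
          ≤ ENNReal.ofReal (27 * (2:ℝ) ^ (3 * k) / (α ^ 2 * M)) ∧
      μ {ω | α ≤ |YB ω / ((ρB ^ 3).trace).re - 1|}
          ≤ ENNReal.ofReal (27 * (2:ℝ) ^ (3 * k) / (α ^ 2 * M)) ∧
      μ {ω | α ≤ |X ω - p|}
          ≤ ENNReal.ofReal (27 * (2:ℝ) ^ (2 * k) / (α ^ 2 * M)) := by
  intro α hα
  have hdimA : (2:ℝ) ≤ 2 ^ k := le_self_pow₀ one_le_two (by omega)
  have hdimAB : (2:ℝ) ≤ 2 ^ (2 * k) := le_self_pow₀ one_le_two (by omega)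
  have hMA : 3 * ((2:ℝ) ^ k) ^ 4 ≤ M := by
    refine le_trans ?_ hM
    rw [← pow_mul]
    exact mul_le_mul_of_nonneg_left (pow_le_pow_right₀ one_le_two (by omega)) (by norm_num)
  have hMAB : 3 * ((2:ℝ) ^ (2 * k)) ^ 4 ≤ M := by rwa [← pow_mul, mul_right_comm]
  have hcardA : (Fintype.card (Fin (2 ^ k)) : ℝ) ≤ 2 ^ k := by simp
  rw [pow_mul' (2:ℝ) 3 k]
  refine ⟨?_, ?_, ?_⟩
  · exact meas_div_re_trace_pow_three_sub_one_ge_le_of_evariance_le_momentVarianceBound hρA htrA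
      hdimA hcardA hMA hYAm hmA (hvA.trans_eq (by rw [momentVarianceBound]; congr 1; ring)) hα
  · exact meas_div_re_trace_pow_three_sub_one_ge_le_of_evariance_le_momentVarianceBound hρB htrB
      hdimA hcardA hMA hYBm hmB (hvB.trans_eq (by rw [momentVarianceBound]; congr 1; ring)) hα
  · exact meas_ge_le_of_evariance_le_momentVarianceBound hρAB htrAB hdimAB hMAB hXm hmX
      (hvX.trans_eq (by rw [momentVarianceBound]; congr 1; ring)) hα

/-- Chebyshev-type tail bounds for the (third) PT-moment and
third-moment estimators, given the variance bounds of Rath et al. -/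
theorem chebyshev_pt_moment_estimators
    {Ω : Type*} [MeasurableSpace Ω] (μ : Measure Ω) [IsProbabilityMeasure μ]
    (k : ℕ) (hk : 1 ≤ k) (M : ℝ) (hM : 3 * (2:ℝ) ^ (8 * k) ≤ M)
    (ρAB : Matrix (Fin (2 ^ (2 * k))) (Fin (2 ^ (2 * k))) ℂ)
    (hρAB : ρAB.PosSemidef) (htrAB : ρAB.trace = 1)
    (ρA ρB : Matrix (Fin (2 ^ k)) (Fin (2 ^ k)) ℂ)
    (hρA : ρA.PosSemidef) (htrA : ρA.trace = 1)
    (hρB : ρB.PosSemidef) (htrB : ρB.trace = 1)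
    (X YA YB : Ω → ℝ) (hXm : Measurable X) (hYAm : Measurable YA) (hYBm : Measurable YB)
    (p : ℝ) (hmX : ∫ ω, X ω ∂μ = p)
    (hmA : ∫ ω, YA ω ∂μ = ((ρA ^ 3).trace).re)
    (hmB : ∫ ω, YB ω ∂μ = ((ρB ^ 3).trace).re)
    (hvX : evariance X μ ≤ ENNReal.ofReal
      (9 * (2:ℝ) ^ (2 * k) * ((ρAB ^ 4).trace).re / M
        + 18 * (2:ℝ) ^ (6 * k) * ((ρAB ^ 2).trace).re / (M - 1) ^ 2
        + 6 * (2:ℝ) ^ (12 * k) / (M - 2) ^ 3))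
    (hvA : evariance YA μ ≤ ENNReal.ofReal
      (9 * (2:ℝ) ^ k * ((ρA ^ 4).trace).re / M
        + 18 * (2:ℝ) ^ (3 * k) * ((ρA ^ 2).trace).re / (M - 1) ^ 2
        + 6 * (2:ℝ) ^ (6 * k) / (M - 2) ^ 3))
    (hvB : evariance YB μ ≤ ENNReal.ofReal
      (9 * (2:ℝ) ^ k * ((ρB ^ 4).trace).re / M
        + 18 * (2:ℝ) ^ (3 * k) * ((ρB ^ 2).trace).re / (M - 1) ^ 2
        + 6 * (2:ℝ) ^ (6 * k) / (M - 2) ^ 3)) :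
    ∀ α : ℝ, 0 < α →
      μ {ω | α ≤ |YA ω / ((ρA ^ 3).trace).re - 1|}
          ≤ ENNReal.ofReal (27 * (2:ℝ) ^ (3 * k) / (α ^ 2 * M)) ∧
      μ {ω | α ≤ |YB ω / ((ρB ^ 3).trace).re - 1|}
          ≤ ENNReal.ofReal (27 * (2:ℝ) ^ (3 * k) / (α ^ 2 * M)) ∧
      μ {ω | α ≤ |X ω - p|}
          ≤ ENNReal.ofReal (27 * (2:ℝ) ^ (2 * k) / (α ^ 2 * M)) :=
  chebyshev_pt_moment_estimators_general μ k hk M hM ρAB hρAB htrAB ρA ρB hρA htrA hρB htrB X YA YB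
    hXm hYAm hYBm p hmX hmA hmB hvX hvA hvB
end

section
/- Let k ≥ 1 be an integer, let 0 < δ ≤ 1, and let M be a real number with M ≥ 27 · 2^{11k+9} / δ². Let p, P_A, P_B be real numbers with |p| ≤ 1, P_A ≥ 2^{−2k} and P_B ≥ 2^{−2k}. Let X, Y_A, Y_B be mutually independent real-valued random variables satisfying, for every α > 0, the tail bounds Pr( |X − p| ≥ α ) ≤ 27 · 2^{2k}/(α² M), Pr( |Y_A/P_A − 1| ≥ α ) ≤ 27 · 2^{3k}/(α² M), and Pr( |Y_B/P_B − 1| ≥ α ) ≤ 27 · 2^{3k}/(α² M). Define the random variable S = X/(Y_A Y_B). Then Pr( |S − p/(P_A P_B)| ≥ δ ) ≤ 81 · 2^{11k+9} / (M δ²). -/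
/-!
Write `a = Y_A / P_A` and `b = Y_B / P_B`. If `|X - p|`, `|a - 1|` and `|b - 1|` are all below
`α ≤ 1/2`, then `|ab - 1| < 3α` and `ab > 1/4`, so
`S - p/(P_A P_B) = (X - p·ab) / (P_A P_B · ab)` has absolute value below `16α / (P_A P_B)`.
With `α = δ / 2^(4k+4)` and `P_A P_B ≥ 2^(-4k)` this is at most `δ`, so the event
`|S - p/(P_A P_B)| ≥ δ` lies in the union of the three tail events at level `α`, and the union
bound with the three tail bounds gives the claim.
-/

open MeasureTheory ProbabilityTheory

lemma abs_mul_sub_one_lt {a b α : ℝ} (hα : α ≤ 1) (ha : |a - 1| < α) (hb : |b - 1| < α) :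
    |a * b - 1| < 3 * α := by
  have hprod : |a - 1| * |b - 1| < α := by
    nlinarith [abs_nonneg (a - 1), abs_nonneg (b - 1)]
  calc |a * b - 1| = |(a - 1) + (b - 1) + (a - 1) * (b - 1)| := by ring_nf
    _ ≤ |a - 1| + |b - 1| + |a - 1| * |b - 1| := by
      rw [← abs_mul]; exact (abs_add_le _ _).trans (by gcongr; exact abs_add_le _ _)
    _ < 3 * α := by linarith

lemma abs_div_mul_sub_div_mul_lt {x p ya yb PA PB α : ℝ} (hPA : 0 < PA) (hPB : 0 < PB)
    (hp : |p| ≤ 1) (hα : α ≤ 1 / 2)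
    (hx : |x - p| < α) (ha : |ya / PA - 1| < α) (hb : |yb / PB - 1| < α) :
    |x / (ya * yb) - p / (PA * PB)| < 16 * α / (PA * PB) := by
  set D := ya / PA * (yb / PB) with hD
  have hD1 : |D - 1| < 3 * α := abs_mul_sub_one_lt (by linarith) ha hb
  have hya : 1 / 2 < ya / PA := by linarith [(abs_lt.mp ha).1]
  have hyb : 1 / 2 < yb / PB := by linarith [(abs_lt.mp hb).1]
  have hD4 : 1 / 4 < D := by nlinarith
  have hnum : |x - p * D| < 4 * α :=
    calc |x - p * D| = |(x - p) - p * (D - 1)| := by ring_nf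
      _ ≤ |x - p| + |p| * |D - 1| := (abs_sub _ _).trans (by rw [abs_mul])
      _ < 4 * α := by nlinarith [abs_nonneg p, abs_nonneg (D - 1)]
  have hya0 : ya ≠ 0 := by rintro rfl; norm_num at hya
  have hyb0 : yb ≠ 0 := by rintro rfl; norm_num at hyb
  have heq : x / (ya * yb) - p / (PA * PB) = (x - p * D) / (PA * PB * D) := by
    rw [hD]; field_simp
  have hPP : 0 < PA * PB := mul_pos hPA hPB
  have hden : 0 < PA * PB * D := mul_pos hPP (by linarith)
  rw [heq, abs_div, abs_of_pos hden, div_lt_div_iff₀ hden hPP]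
  have hα0 : 0 < α := (abs_nonneg _).trans_lt hx
  nlinarith [mul_lt_mul_of_pos_right hnum hPP, mul_pos hα0 hPP]

lemma measure_le_add_add_of_subset_union {Ω : Type*} [MeasurableSpace Ω] (μ : Measure Ω)
    {s t₁ t₂ t₃ : Set Ω} (h : s ⊆ t₁ ∪ t₂ ∪ t₃) : μ s ≤ μ t₁ + μ t₂ + μ t₃ :=
  (measure_mono h).trans <| (measure_union_le _ _).trans <| by gcongr; exact measure_union_le _ _

lemma sixteen_mul_div_le_of_inv_pow_le {k : ℕ} {δ PA PB : ℝ} (hδ : 0 ≤ δ)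
    (hPA : ((2:ℝ) ^ (2 * k))⁻¹ ≤ PA) (hPB : ((2:ℝ) ^ (2 * k))⁻¹ ≤ PB) :
    16 * (δ / 2 ^ (4 * k + 4)) / (PA * PB) ≤ δ := by
  have hPP : ((2:ℝ) ^ (4 * k))⁻¹ ≤ PA * PB := by
    calc ((2:ℝ) ^ (4 * k))⁻¹ = ((2:ℝ) ^ (2 * k))⁻¹ * ((2:ℝ) ^ (2 * k))⁻¹ := by
          rw [← mul_inv, ← pow_add]; ring_nf
      _ ≤ PA * PB := mul_le_mul hPA hPB (by positivity) ((by positivity : (0:ℝ) < _).le.trans hPA)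
  have hPP0 : 0 < PA * PB := lt_of_lt_of_le (by positivity) hPP
  rw [div_le_iff₀ hPP0, pow_add]
  calc 16 * (δ / (2 ^ (4 * k) * 2 ^ 4)) = δ * ((2:ℝ) ^ (4 * k))⁻¹ := by field_simp; ring
    _ ≤ δ * (PA * PB) := by gcongr

lemma three_mul_tail_bound_le {k : ℕ} {δ M : ℝ} (hδ : 0 < δ) (hM : 0 < M) :
    3 * (27 * (2:ℝ) ^ (3 * k) / ((δ / 2 ^ (4 * k + 4)) ^ 2 * M))
      ≤ 81 * (2:ℝ) ^ (11 * k + 9) / (M * δ ^ 2) := by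
  have h : 3 * (27 * (2:ℝ) ^ (3 * k) / ((δ / 2 ^ (4 * k + 4)) ^ 2 * M))
      = 81 * (2:ℝ) ^ (11 * k + 8) / (M * δ ^ 2) := by
    field_simp
    ring
  rw [h]
  gcongr
  · norm_num
  · omega

theorem normalized_pt_estimator_tail_bound_general
    {Ω : Type*} [MeasurableSpace Ω] (μ : Measure Ω)
    (k : ℕ) (δ M : ℝ) (hδ0 : 0 < δ) (hδ1 : δ ≤ 1)
    (hM : 27 * (2:ℝ) ^ (11 * k + 9) / δ ^ 2 ≤ M)
    (p PA PB : ℝ) (hp : |p| ≤ 1)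
    (hPA : ((2:ℝ) ^ (2 * k))⁻¹ ≤ PA) (hPB : ((2:ℝ) ^ (2 * k))⁻¹ ≤ PB)
    (X YA YB : Ω → ℝ)
    (htailX : ∀ α : ℝ, 0 < α →
      μ {ω | α ≤ |X ω - p|} ≤ ENNReal.ofReal (27 * (2:ℝ) ^ (2 * k) / (α ^ 2 * M)))
    (htailA : ∀ α : ℝ, 0 < α →
      μ {ω | α ≤ |YA ω / PA - 1|} ≤ ENNReal.ofReal (27 * (2:ℝ) ^ (3 * k) / (α ^ 2 * M)))
    (htailB : ∀ α : ℝ, 0 < α →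
      μ {ω | α ≤ |YB ω / PB - 1|} ≤ ENNReal.ofReal (27 * (2:ℝ) ^ (3 * k) / (α ^ 2 * M))) :
    μ {ω | δ ≤ |X ω / (YA ω * YB ω) - p / (PA * PB)|}
      ≤ ENNReal.ofReal (81 * (2:ℝ) ^ (11 * k + 9) / (M * δ ^ 2)) := by
  have hM0 : 0 < M := lt_of_lt_of_le (by positivity) hM
  have hPA0 : 0 < PA := lt_of_lt_of_le (by positivity) hPA
  have hPB0 : 0 < PB := lt_of_lt_of_le (by positivity) hPB
  set α : ℝ := δ / 2 ^ (4 * k + 4)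
  have hα0 : 0 < α := by positivity
  have hα_le : α ≤ 1 / 2 := by
    rw [div_le_iff₀ (by positivity), pow_add]
    nlinarith [one_le_pow₀ (M₀ := ℝ) one_le_two (n := 4 * k)]
  have hsub : {ω | δ ≤ |X ω / (YA ω * YB ω) - p / (PA * PB)|} ⊆
      {ω | α ≤ |X ω - p|} ∪ {ω | α ≤ |YA ω / PA - 1|} ∪ {ω | α ≤ |YB ω / PB - 1|} := by
    intro ω hω
    by_contra hc
    simp only [Set.mem_union, Set.mem_ofPred_eq, not_or, not_le] at hc hω
    exact hω.not_gt <| (abs_div_mul_sub_div_mul_lt hPA0 hPB0 hp hα_le hc.1.1 hc.1.2 hc.2).trans_le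
      (sixteen_mul_div_le_of_inv_pow_le hδ0.le hPA hPB)
  have htailX' : μ {ω | α ≤ |X ω - p|} ≤ ENNReal.ofReal (27 * (2:ℝ) ^ (3 * k) / (α ^ 2 * M)) :=
    (htailX α hα0).trans <| ENNReal.ofReal_le_ofReal <| by
      gcongr; exacts [one_le_two, by omega]
  calc _ ≤ _ := measure_le_add_add_of_subset_union μ hsub
    _ ≤ _ := add_le_add (add_le_add htailX' (htailA α hα0)) (htailB α hα0)
    _ = 3 * ENNReal.ofReal (27 * (2:ℝ) ^ (3 * k) / (α ^ 2 * M)) := by ring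
    _ ≤ _ := by
      rw [← ENNReal.ofReal_ofNat, ← ENNReal.ofReal_mul (by norm_num)]
      exact ENNReal.ofReal_le_ofReal (three_mul_tail_bound_le hδ0 hM0)

/-- Tail bound for the normalized-PT-moment estimator `S = X/(Y_A Y_B)`
built from three independent random variables with Chebyshev-type tails. -/
theorem normalized_pt_estimator_tail_bound
    {Ω : Type*} [MeasurableSpace Ω] (μ : Measure Ω) [IsProbabilityMeasure μ]
    (k : ℕ) (hk : 1 ≤ k) (δ M : ℝ) (hδ0 : 0 < δ) (hδ1 : δ ≤ 1)
    (hM : 27 * (2:ℝ) ^ (11 * k + 9) / δ ^ 2 ≤ M)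
    (p PA PB : ℝ) (hp : |p| ≤ 1)
    (hPA : ((2:ℝ) ^ (2 * k))⁻¹ ≤ PA) (hPB : ((2:ℝ) ^ (2 * k))⁻¹ ≤ PB)
    (X YA YB : Ω → ℝ)
    (hXm : Measurable X) (hYAm : Measurable YA) (hYBm : Measurable YB)
    (hind : iIndepFun ![X, YA, YB] μ)
    (htailX : ∀ α : ℝ, 0 < α →
      μ {ω | α ≤ |X ω - p|} ≤ ENNReal.ofReal (27 * (2:ℝ) ^ (2 * k) / (α ^ 2 * M)))
    (htailA : ∀ α : ℝ, 0 < α →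
      μ {ω | α ≤ |YA ω / PA - 1|} ≤ ENNReal.ofReal (27 * (2:ℝ) ^ (3 * k) / (α ^ 2 * M)))
    (htailB : ∀ α : ℝ, 0 < α →
      μ {ω | α ≤ |YB ω / PB - 1|} ≤ ENNReal.ofReal (27 * (2:ℝ) ^ (3 * k) / (α ^ 2 * M))) :
    μ {ω | δ ≤ |X ω / (YA ω * YB ω) - p / (PA * PB)|}
      ≤ ENNReal.ofReal (81 * (2:ℝ) ^ (11 * k + 9) / (M * δ ^ 2)) :=
  normalized_pt_estimator_tail_bound_general μ k δ M hδ0 hδ1 hM p PA PB hp hPA hPB X YA YB htailX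
    htailA htailB
end

section
/- Let α_2, β_2 > 0 be real numbers, let 0 < δ ≤ 1/2, and let k ≥ 2 and R ≥ 2 be integers with L = Rk and k ≥ log(α_2 L / δ)/β_2. Let P_2 > 0 and let e_2, …, e_{R−1} be real numbers with |e_j| ≤ α_2 e^{−β_2 k}, and set r_2 = P_2 · ∏_{j=2}^{R−1}(1 + e_j). Let M be a real number with M ≥ max{ 2^{8k}, 2^{4k+10} L² / δ² }, and let ε_1, …, ε_{R−1}, η_2, …, η_{R−1} be mutually independent real-valued random variables with, for every x > 0, Pr(|ε_j| ≥ x) ≤ 2^{4k+3}/(x² M) and Pr(|η_j| ≥ x) ≤ 2^{2k+3}/(x² M). Define the random variable r_2^{(e)} = r_2 · ( ∏_{j=1}^{R−1}(1 + ε_j) ) / ( ∏_{j=2}^{R−1}(1 + η_j) ). Then Pr( | r_2^{(e)} / P_2 − 1 | ≥ 7δ ) ≤ 2^{4k+11} L³ / (δ² M). -/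
/-!
Off an event of small probability every noise term satisfies `|ε_j|, |η_j| < δ / (2L)`. There the
three products `∏ (1 + e_j)`, `∏ (1 + ε_j)`, `∏ (1 + η_j)` have at most `L` factors and total
perturbation at most `δ`, `δ/2`, `δ/2` (the first because `k ≥ log (α₂ L / δ) / β₂` forces
`|e_j| ≤ δ / L`). A product with total perturbation `S ≤ 1` lies within `e^S - 1 ≤ S + S²` of
`1`, and then the ratio `r₂⁽ᵉ⁾ / P₂` lies within `7δ` of `1`.
The bad event is covered by at most `2L` tail events, each of probability at most
`2^{4k+3} / (x² M)` with `x = δ / (2L)`, so a union bound concludes.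
-/

open MeasureTheory ProbabilityTheory Finset
open scoped ENNReal

theorem Real.exp_sub_one_le_add_sq {x : ℝ} (hx : |x| ≤ 1) : Real.exp x - 1 ≤ x + x ^ 2 := by
  linarith [(abs_le.mp (Real.abs_exp_sub_one_sub_id_le hx)).2]

theorem abs_prod_one_add_sub_one_le {ι : Type*} (s : Finset ι) (a : ι → ℝ) {t S : ℝ}
    (ha : ∀ j ∈ s, |a j| ≤ t) (hS : #s * t ≤ S) (hS1 : S ≤ 1) :
    |∏ j ∈ s, (1 + a j) - 1| ≤ S + S ^ 2 := by
  have hsum : ∑ j ∈ s, |a j| ≤ S :=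
    (sum_le_card_nsmul s _ t ha).trans (by rwa [nsmul_eq_mul])
  have hS0 : 0 ≤ S := (sum_nonneg fun j _ => abs_nonneg (a j)).trans hsum
  calc |∏ j ∈ s, (1 + a j) - 1| ≤ Real.exp (∑ j ∈ s, |a j|) - 1 :=
        norm_prod_one_add_sub_one_le s a
    _ ≤ Real.exp S - 1 := by gcongr
    _ ≤ S + S ^ 2 := Real.exp_sub_one_le_add_sq (abs_le.mpr ⟨by linarith, hS1⟩)

theorem abs_mul_div_sub_one_le {D E H u v w : ℝ} (hD : |D - 1| ≤ u) (hE : |E - 1| ≤ v)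
    (hH : |H - 1| ≤ w) (hw : w < 1) :
    |D * E / H - 1| ≤ (u + v + u * v + w) / (1 - w) := by
  have hH' : 1 - w ≤ |H| := by
    have := abs_sub_abs_le_abs_sub 1 H
    rw [abs_one, abs_sub_comm] at this
    linarith
  have hH0 : H ≠ 0 := by
    rintro rfl
    rw [abs_zero] at hH'
    linarith
  have hnum : |D * E - H| ≤ u + v + u * v + w := by
    calc |D * E - H| = |(D - 1) + (E - 1) + (D - 1) * (E - 1) - (H - 1)| := by ring_nf
      _ ≤ |D - 1| + |E - 1| + |D - 1| * |E - 1| + |H - 1| := by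
        grw [abs_sub, abs_add_le, abs_add_le, abs_mul]
      _ ≤ u + v + u * v + w := by
        gcongr
        exact (abs_nonneg _).trans hD
  rw [show D * E / H - 1 = (D * E - H) / H by field_simp, abs_div]
  gcongr
  linarith [abs_nonneg (D * E - H)]

theorem abs_mul_div_sub_one_lt_seven_mul {D E H δ : ℝ} (hδ0 : 0 < δ) (hδ : δ ≤ 1 / 2)
    (hD : |D - 1| ≤ δ + δ ^ 2) (hE : |E - 1| ≤ δ / 2 + (δ / 2) ^ 2)
    (hH : |H - 1| ≤ δ / 2 + (δ / 2) ^ 2) :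
    |D * E / H - 1| < 7 * δ := by
  have hw : δ / 2 + (δ / 2) ^ 2 < 1 := by nlinarith
  refine (abs_mul_div_sub_one_le hD hE hH hw).trans_lt ?_
  rw [div_lt_iff₀ (by linarith)]
  nlinarith [mul_pos hδ0 hδ0, mul_pos (mul_pos hδ0 hδ0) hδ0]

theorem abs_mul_prod_div_prod_sub_one_lt_seven_mul {ι κ : Type*} {D δ L : ℝ}
    (hδ0 : 0 < δ) (hδ : δ ≤ 1 / 2) (hL : 0 < L) (hD : |D - 1| ≤ δ + δ ^ 2)
    (s : Finset ι) (t : Finset κ) (a : ι → ℝ) (b : κ → ℝ) (hs : #s ≤ L) (ht : #t ≤ L)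
    (ha : ∀ j ∈ s, |a j| ≤ δ / (2 * L)) (hb : ∀ j ∈ t, |b j| ≤ δ / (2 * L)) :
    |D * (∏ j ∈ s, (1 + a j)) / ∏ j ∈ t, (1 + b j) - 1| < 7 * δ := by
  have hx : 0 ≤ δ / (2 * L) := by positivity
  have hLx : L * (δ / (2 * L)) = δ / 2 := by field_simp
  refine abs_mul_div_sub_one_lt_seven_mul hδ0 hδ hD ?_ ?_
  · exact abs_prod_one_add_sub_one_le s a ha
      ((mul_le_mul_of_nonneg_right hs hx).trans hLx.le) (by linarith)
  · exact abs_prod_one_add_sub_one_le t b hb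
      ((mul_le_mul_of_nonneg_right ht hx).trans hLx.le) (by linarith)

theorem mul_exp_neg_le_of_log_div_le {α β c k : ℝ} (hα : 0 < α) (hβ : 0 < β) (hc : 0 < c)
    (hk : Real.log (α / c) / β ≤ k) : α * Real.exp (-(β * k)) ≤ c := by
  rw [div_le_iff₀ hβ, Real.log_le_iff_le_exp (by positivity), div_le_iff₀ hc] at hk
  rw [Real.exp_neg, ← div_eq_mul_inv, div_le_iff₀ (Real.exp_pos _)]
  rwa [mul_comm k β, mul_comm] at hk

theorem card_Icc_le_mul (a R k : ℕ) (hR : 1 ≤ R) (hk : 1 ≤ k) : #(Icc a (R - 1)) ≤ R * k := by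
  have : R ≤ R * k := Nat.le_mul_of_pos_right R hk
  rw [Nat.card_Icc]
  omega

section UnionBound

variable {Ω : Type*} [MeasurableSpace Ω] (μ : Measure Ω)

theorem measure_exists_le_abs_le {ι : Type*} (s : Finset ι) (f : ι → Ω → ℝ) {x : ℝ}
    {c : ℝ≥0∞} (hf : ∀ j ∈ s, μ {ω | x ≤ |f j ω|} ≤ c) :
    μ {ω | ∃ j ∈ s, x ≤ |f j ω|} ≤ #s * c := by
  calc μ {ω | ∃ j ∈ s, x ≤ |f j ω|} = μ (⋃ j ∈ s, {ω | x ≤ |f j ω|}) := by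
        congr 1
        ext ω
        simp
    _ ≤ ∑ j ∈ s, μ {ω | x ≤ |f j ω|} := measure_biUnion_finset_le _ _
    _ ≤ #s * c := by simpa using sum_le_card_nsmul s _ c hf

theorem measure_union_exists_le_abs_le {ι κ : Type*} (s : Finset ι) (t : Finset κ)
    (f : ι → Ω → ℝ) (g : κ → Ω → ℝ) {x c : ℝ} (hc : 0 ≤ c)
    (hf : ∀ j ∈ s, μ {ω | x ≤ |f j ω|} ≤ ENNReal.ofReal c)
    (hg : ∀ j ∈ t, μ {ω | x ≤ |g j ω|} ≤ ENNReal.ofReal c) :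
    μ ({ω | ∃ j ∈ s, x ≤ |f j ω|} ∪ {ω | ∃ j ∈ t, x ≤ |g j ω|}) ≤
      ENNReal.ofReal ((#s + #t) * c) := by
  calc _ ≤ μ {ω | ∃ j ∈ s, x ≤ |f j ω|} + μ {ω | ∃ j ∈ t, x ≤ |g j ω|} := measure_union_le _ _
    _ ≤ #s * ENNReal.ofReal c + #t * ENNReal.ofReal c :=
        add_le_add (measure_exists_le_abs_le μ s f hf) (measure_exists_le_abs_le μ t g hg)
    _ = ENNReal.ofReal ((#s + #t) * c) := by
        rw [add_mul, ENNReal.ofReal_add (by positivity) (by positivity),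
          ENNReal.ofReal_mul (by positivity), ENNReal.ofReal_mul (by positivity),
          ENNReal.ofReal_natCast, ENNReal.ofReal_natCast]

end UnionBound

theorem mul_two_pow_div_sq_mul_le {n L δ M : ℝ} (k : ℕ) (hn : n ≤ 2 * L) (hL : 0 < L)
    (hδ : 0 < δ) (hM : 0 < M) :
    n * (2 ^ (4 * k + 3) / ((δ / (2 * L)) ^ 2 * M)) ≤ 2 ^ (4 * k + 11) * L ^ 3 / (δ ^ 2 * M) := by
  have hpow : (2:ℝ) ^ (4 * k + 3 + 3) ≤ 2 ^ (4 * k + 11) := pow_le_pow_right₀ one_le_two (by omega)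
  calc _ ≤ 2 * L * (2 ^ (4 * k + 3) / ((δ / (2 * L)) ^ 2 * M)) := by gcongr
    _ = 2 ^ (4 * k + 3 + 3) * L ^ 3 / (δ ^ 2 * M) := by
        field_simp
        ring
    _ ≤ 2 ^ (4 * k + 11) * L ^ 3 / (δ ^ 2 * M) := by gcongr

theorem purity_estimation_AFC_guarantee_general
    {Ω : Type*} [MeasurableSpace Ω] (μ : Measure Ω)
    (α2 β2 : ℝ) (hα : 0 < α2) (hβ : 0 < β2)
    (δ : ℝ) (hδ0 : 0 < δ) (hδ : δ ≤ 1/2)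
    (k R L : ℕ) (hk : 2 ≤ k) (hR : 2 ≤ R) (hL : L = R * k)
    (hkb : Real.log (α2 * L / δ) / β2 ≤ (k:ℝ))
    (P2 : ℝ) (hP2 : 0 < P2)
    (e : ℕ → ℝ)
    (he : ∀ j, 2 ≤ j → j ≤ R - 1 → |e j| ≤ α2 * Real.exp (-(β2 * k)))
    (M : ℝ)
    (hM : max ((2:ℝ) ^ (8 * k)) ((2:ℝ) ^ (4 * k + 10) * (L:ℝ) ^ 2 / δ ^ 2) ≤ M)
    (ε η : ℕ → Ω → ℝ)
    (htailε : ∀ j, 1 ≤ j → j ≤ R - 1 → ∀ x : ℝ, 0 < x →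
      μ {ω | x ≤ |ε j ω|} ≤ ENNReal.ofReal ((2:ℝ) ^ (4 * k + 3) / (x ^ 2 * M)))
    (htailη : ∀ j, 2 ≤ j → j ≤ R - 1 → ∀ x : ℝ, 0 < x →
      μ {ω | x ≤ |η j ω|} ≤ ENNReal.ofReal ((2:ℝ) ^ (2 * k + 3) / (x ^ 2 * M))) :
    μ {ω | 7 * δ ≤
        |(P2 * ∏ j ∈ Finset.Icc 2 (R - 1), (1 + e j)) *
            ((∏ j ∈ Finset.Icc 1 (R - 1), (1 + ε j ω)) /
              (∏ j ∈ Finset.Icc 2 (R - 1), (1 + η j ω))) / P2 - 1|}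
      ≤ ENNReal.ofReal ((2:ℝ) ^ (4 * k + 11) * (L:ℝ) ^ 3 / (δ ^ 2 * M)) := by
  have hL0 : (0 : ℝ) < L := by rw [hL]; positivity
  have hM0 : 0 < M := lt_of_lt_of_le (by positivity) ((le_max_left _ _).trans hM)
  have hcard (a : ℕ) : (#(Icc a (R - 1)) : ℝ) ≤ L := by
    rw [hL]
    exact_mod_cast card_Icc_le_mul a R k (by omega) (by omega)
  have he' : ∀ j ∈ Icc 2 (R - 1), |e j| ≤ δ / L := fun j hj =>
    (he j (mem_Icc.mp hj).1 (mem_Icc.mp hj).2).trans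
      (mul_exp_neg_le_of_log_div_le hα hβ (by positivity) (by rwa [div_div_eq_mul_div]))
  have hD : |∏ j ∈ Icc 2 (R - 1), (1 + e j) - 1| ≤ δ + δ ^ 2 :=
    abs_prod_one_add_sub_one_le _ _ he'
      ((mul_le_mul_of_nonneg_right (hcard 2) (by positivity)).trans_eq (by field_simp))
      (by linarith)
  set x := δ / (2 * L)
  have hx : 0 < x := by positivity
  have htailη' : ∀ j ∈ Icc 2 (R - 1), μ {ω | x ≤ |η j ω|} ≤
      ENNReal.ofReal ((2:ℝ) ^ (4 * k + 3) / (x ^ 2 * M)) := fun j hj =>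
    (htailη j (mem_Icc.mp hj).1 (mem_Icc.mp hj).2 x hx).trans <| ENNReal.ofReal_le_ofReal <|
      div_le_div_of_nonneg_right (pow_le_pow_right₀ one_le_two (by omega)) (by positivity)
  calc _ ≤ μ ({ω | ∃ j ∈ Icc 1 (R - 1), x ≤ |ε j ω|} ∪
          {ω | ∃ j ∈ Icc 2 (R - 1), x ≤ |η j ω|}) := by
        refine measure_mono fun ω hω => ?_
        contrapose! hω
        simp only [Set.mem_union, Set.mem_ofPred_eq, not_or, not_exists, not_and, not_le] at hω ⊢
        rw [show ∀ D F : ℝ, P2 * D * F / P2 = D * F from fun D F => by field_simp,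
          ← mul_div_assoc]
        exact abs_mul_prod_div_prod_sub_one_lt_seven_mul hδ0 hδ hL0 hD _ _ _ _ (hcard 1) (hcard 2)
          (fun j hj => (hω.1 j hj).le) (fun j hj => (hω.2 j hj).le)
    _ ≤ _ := measure_union_exists_le_abs_le μ _ _ _ _ (by positivity)
        (fun j hj => htailε j (mem_Icc.mp hj).1 (mem_Icc.mp hj).2 x hx) htailη'
    _ ≤ _ := ENNReal.ofReal_le_ofReal <|
        mul_two_pow_div_sq_mul_le k (by linarith [hcard 1, hcard 2]) hL0 hδ0 hM0

/-- Full statistical guarantee for the global-purity estimator of a state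
satisfying the approximate factorization conditions:
`Pr( |r₂⁽ᵉ⁾/P₂ − 1| ≥ 7δ ) ≤ 2^{4k+11} L³ / (δ² M)`. -/
theorem purity_estimation_AFC_guarantee
    {Ω : Type*} [MeasurableSpace Ω] (μ : Measure Ω) [IsProbabilityMeasure μ]
    (α2 β2 : ℝ) (hα : 0 < α2) (hβ : 0 < β2)
    (δ : ℝ) (hδ0 : 0 < δ) (hδ : δ ≤ 1/2)
    (k R L : ℕ) (hk : 2 ≤ k) (hR : 2 ≤ R) (hL : L = R * k)
    (hkb : Real.log (α2 * L / δ) / β2 ≤ (k:ℝ))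
    (P2 : ℝ) (hP2 : 0 < P2)
    (e : ℕ → ℝ)
    (he : ∀ j, 2 ≤ j → j ≤ R - 1 → |e j| ≤ α2 * Real.exp (-(β2 * k)))
    (M : ℝ)
    (hM : max ((2:ℝ) ^ (8 * k)) ((2:ℝ) ^ (4 * k + 10) * (L:ℝ) ^ 2 / δ ^ 2) ≤ M)
    (ε η : ℕ → Ω → ℝ)
    (hmε : ∀ j, Measurable (ε j)) (hmη : ∀ j, Measurable (η j))
    (hind : iIndepFun
      (Sum.elim (fun j : {j : ℕ // 1 ≤ j ∧ j ≤ R - 1} => ε j.1)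
                (fun j : {j : ℕ // 2 ≤ j ∧ j ≤ R - 1} => η j.1)) μ)
    (htailε : ∀ j, 1 ≤ j → j ≤ R - 1 → ∀ x : ℝ, 0 < x →
      μ {ω | x ≤ |ε j ω|} ≤ ENNReal.ofReal ((2:ℝ) ^ (4 * k + 3) / (x ^ 2 * M)))
    (htailη : ∀ j, 2 ≤ j → j ≤ R - 1 → ∀ x : ℝ, 0 < x →
      μ {ω | x ≤ |η j ω|} ≤ ENNReal.ofReal ((2:ℝ) ^ (2 * k + 3) / (x ^ 2 * M))) :
    μ {ω | 7 * δ ≤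
        |(P2 * ∏ j ∈ Finset.Icc 2 (R - 1), (1 + e j)) *
            ((∏ j ∈ Finset.Icc 1 (R - 1), (1 + ε j ω)) /
              (∏ j ∈ Finset.Icc 2 (R - 1), (1 + η j ω))) / P2 - 1|}
      ≤ ENNReal.ofReal ((2:ℝ) ^ (4 * k + 11) * (L:ℝ) ^ 3 / (δ ^ 2 * M)) :=
  purity_estimation_AFC_guarantee_general μ α2 β2 hα hβ δ hδ0 hδ k R L hk hR hL hkb P2 hP2 e he M hM
    ε η htailε htailη
end

section
/- Let χ ≥ 1 be an integer, let ζ_1, ζ_2 > 0 be real numbers, and set ζ = max(ζ_1, ζ_2). Let λ_1, …, λ_{χ−1} be complex numbers with |λ_j| ≤ e^{−1/ζ_1} for all j, let μ_0 be a nonzero complex number, and let μ_1, …, μ_{χ²−1} be complex numbers with |μ_j/μ_0| ≤ e^{−1/ζ_2} for all j ≥ 1. Then for every real L ≥ ζ_1 · log(2χ) (so that 1 + Σ_{j=1}^{χ−1} λ_j^L ≠ 0), one has | ( 1 + Σ_{j=1}^{χ²−1} (μ_j/μ_0)^{L} ) / ( 1 + Σ_{j=1}^{χ−1} λ_j^{L}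 )² − 1 | ≤ 2⁴ χ² e^{−L/ζ}. -/
/-!
Write `S = ∑ λⱼ^L` and `T = ∑ (μⱼ/μ₀)^L`. Then `(1 + T)/(1 + S)² - 1 = (T - 2S - S²)/(1 + S)²`.
Each summand is exponentially small in `L`, so `‖S‖ ≤ χ e^{-L/ζ₁}` and `‖T‖ ≤ χ² e^{-L/ζ₂}`;
the condition `L ≥ ζ₁ log (2χ)` makes `‖S‖ ≤ 1/2`, which bounds the denominator below by `1/4`
and the numerator by `4 χ² e^{-L/ζ}`.
-/

open Finset Real

lemma norm_sum_Icc_pow_le {𝕜 : Type*} [NormedDivisionRing 𝕜] (z : ℕ → 𝕜) {n : ℕ} {r : ℝ}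
    (h : ∀ j, 1 ≤ j → j ≤ n → ‖z j‖ ≤ r) (L : ℕ) :
    ‖∑ j ∈ Icc 1 n, z j ^ L‖ ≤ n * r ^ L := by
  calc ‖∑ j ∈ Icc 1 n, z j ^ L‖ ≤ ∑ j ∈ Icc 1 n, r ^ L := by
        refine norm_sum_le_of_le _ fun j hj => ?_
        rw [mem_Icc] at hj
        rw [norm_pow]
        exact pow_le_pow_left₀ (norm_nonneg _) (h j hj.1 hj.2) L
    _ = n * r ^ L := by simp

lemma exp_neg_one_div_pow (ζ : ℝ) (L : ℕ) : exp (-1 / ζ) ^ L = exp (-L / ζ) := by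
  rw [← exp_nat_mul]
  ring_nf

lemma exp_neg_div_le_exp_neg_div {x a b : ℝ} (hx : 0 ≤ x) (ha : 0 < a) (hab : a ≤ b) :
    exp (-x / a) ≤ exp (-x / b) := by
  rw [exp_le_exp, neg_div, neg_div, neg_le_neg_iff]
  exact div_le_div_of_nonneg_left hx ha hab

lemma mul_exp_neg_div_le_half {c ζ x : ℝ} (hc : 0 < c) (hζ : 0 < ζ)
    (hx : ζ * log (2 * c) ≤ x) : c * exp (-x / ζ) ≤ 1 / 2 := by
  have hexp : exp (-x / ζ) ≤ exp (-log (2 * c)) := by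
    rw [exp_le_exp, neg_div, neg_le_neg_iff, le_div_iff₀ hζ]
    linarith
  rw [exp_neg, exp_log (by positivity)] at hexp
  calc c * exp (-x / ζ) ≤ c * (2 * c)⁻¹ := by gcongr
    _ = 1 / 2 := by field_simp

lemma norm_one_add_div_one_add_sq_sub_one_le {𝕜 : Type*} [NormedField 𝕜] {S T : 𝕜}
    (hS : ‖S‖ ≤ 1 / 2) : ‖(1 + T) / (1 + S) ^ 2 - 1‖ ≤ 4 * (‖T‖ + 3 * ‖S‖) := by
  have hden : 1 / 2 ≤ ‖1 + S‖ := by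
    have := norm_sub_norm_le (1 : 𝕜) (-S)
    rw [norm_one, norm_neg, sub_neg_eq_add] at this
    linarith
  have hne : 1 + S ≠ 0 := norm_pos_iff.mp (by linarith)
  have hnum : ‖T - 2 * S - S ^ 2‖ ≤ ‖T‖ + 3 * ‖S‖ := by
    calc ‖T - 2 * S - S ^ 2‖ ≤ ‖T‖ + ‖2 * S‖ + ‖S ^ 2‖ :=
          (norm_sub_le _ _).trans (add_le_add_left (norm_sub_le _ _) _)
      _ ≤ ‖T‖ + 2 * ‖S‖ + ‖S‖ ^ 2 := by
        rw [two_mul, two_mul, norm_pow]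
        gcongr
        exact norm_add_le S S
      _ ≤ ‖T‖ + 3 * ‖S‖ := by nlinarith [norm_nonneg S]
  have hrw : (1 + T) / (1 + S) ^ 2 - 1 = (T - 2 * S - S ^ 2) / (1 + S) ^ 2 := by
    field_simp
    ring
  rw [hrw, norm_div, norm_pow, div_le_iff₀ (by positivity)]
  have hden_sq : 1 / 4 ≤ ‖1 + S‖ ^ 2 := by nlinarith
  nlinarith [norm_nonneg T, norm_nonneg S]

theorem mpdo_purity_eigenvalue_bound_general
    (χ : ℕ) (hχ : 1 ≤ χ) (ζ1 ζ2 : ℝ) (hζ1 : 0 < ζ1) (hζ2 : 0 < ζ2)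
    (lam : ℕ → ℂ)
    (hlam : ∀ j, 1 ≤ j → j ≤ χ - 1 → ‖lam j‖ ≤ Real.exp (-1 / ζ1))
    (μ0 : ℂ) (μ : ℕ → ℂ)
    (hμ : ∀ j, 1 ≤ j → j ≤ χ ^ 2 - 1 → ‖μ j / μ0‖ ≤ Real.exp (-1 / ζ2))
    (L : ℕ) (hL : ζ1 * Real.log (2 * χ) ≤ (L:ℝ)) :
    ‖(1 + ∑ j ∈ Finset.Icc 1 (χ ^ 2 - 1), (μ j / μ0) ^ L) /
          (1 + ∑ j ∈ Finset.Icc 1 (χ - 1), lam j ^ L) ^ 2 - 1‖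
      ≤ 2 ^ 4 * (χ:ℝ) ^ 2 * Real.exp (-(L:ℝ) / max ζ1 ζ2) := by
  set E := exp (-(L:ℝ) / max ζ1 ζ2)
  have hχ0 : (0 : ℝ) < χ := by exact_mod_cast hχ
  have hS : ‖∑ j ∈ Icc 1 (χ - 1), lam j ^ L‖ ≤ χ * exp (-L / ζ1) := by
    refine (norm_sum_Icc_pow_le lam hlam L).trans ?_
    rw [exp_neg_one_div_pow]
    gcongr
    exact_mod_cast Nat.sub_le χ 1
  have hT : ‖∑ j ∈ Icc 1 (χ ^ 2 - 1), (μ j / μ0) ^ L‖ ≤ χ ^ 2 * E := by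
    refine (norm_sum_Icc_pow_le (fun j => μ j / μ0) hμ L).trans ?_
    rw [exp_neg_one_div_pow]
    gcongr
    · exact_mod_cast Nat.sub_le (χ ^ 2) 1
    · exact exp_neg_div_le_exp_neg_div L.cast_nonneg hζ2 (le_max_right ζ1 ζ2)
  have hSE : ‖∑ j ∈ Icc 1 (χ - 1), lam j ^ L‖ ≤ χ * E :=
    hS.trans (by gcongr; exact exp_neg_div_le_exp_neg_div L.cast_nonneg hζ1 (le_max_left ζ1 ζ2))
  have hχsq : (χ : ℝ) ≤ χ ^ 2 := by exact_mod_cast Nat.le_self_pow two_ne_zero χ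
  calc _ ≤ 4 * (χ ^ 2 * E + 3 * (χ * E)) :=
        (norm_one_add_div_one_add_sq_sub_one_le
          (hS.trans (mul_exp_neg_div_le_half hχ0 hζ1 hL))).trans (by gcongr)
    _ ≤ 2 ^ 4 * χ ^ 2 * E := by nlinarith [exp_pos (-(L:ℝ) / max ζ1 ζ2)]

/-- Bound on the relative deviation of the MPDO purity ratio coming from
the subleading transfer-matrix eigenvalues. -/
theorem mpdo_purity_eigenvalue_bound
    (χ : ℕ) (hχ : 1 ≤ χ) (ζ1 ζ2 : ℝ) (hζ1 : 0 < ζ1) (hζ2 : 0 < ζ2)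
    (lam : ℕ → ℂ)
    (hlam : ∀ j, 1 ≤ j → j ≤ χ - 1 → ‖lam j‖ ≤ Real.exp (-1 / ζ1))
    (μ0 : ℂ) (hμ0 : μ0 ≠ 0) (μ : ℕ → ℂ)
    (hμ : ∀ j, 1 ≤ j → j ≤ χ ^ 2 - 1 → ‖μ j / μ0‖ ≤ Real.exp (-1 / ζ2))
    (L : ℕ) (hL0 : 0 < L) (hL : ζ1 * Real.log (2 * χ) ≤ (L:ℝ)) :
    ‖(1 + ∑ j ∈ Finset.Icc 1 (χ ^ 2 - 1), (μ j / μ0) ^ L) /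
          (1 + ∑ j ∈ Finset.Icc 1 (χ - 1), lam j ^ L) ^ 2 - 1‖
      ≤ 2 ^ 4 * (χ:ℝ) ^ 2 * Real.exp (-(L:ℝ) / max ζ1 ζ2) :=
  mpdo_purity_eigenvalue_bound_general χ hχ ζ1 ζ2 hζ1 hζ2 lam hlam μ0 μ hμ L hL
end

section
/- For every real number γ with 0 ≤ γ ≤ 1/4, 0 ≤ 1 − (γ² + (1−γ)²)² / (γ³ + (1−γ)³) ≤ γ. -/
/-!
With `p = γ(1-γ)` one has `γ² + (1-γ)² = 1 - 2p` and `γ³ + (1-γ)³ = 1 - 3p`, so the quantity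
equals `p(1-4p)/(1-3p) = γ(1-γ)(1-2γ)² / (γ³ + (1-γ)³)`. This is nonnegative for `γ ∈ [0, 1]`, and it
is at most `γ` because `γ³ + (1-γ)³ - (1-γ)(1-2γ)² = γ(4γ² - 5γ + 2)` and `4γ² - 5γ + 2` has no real root.
-/

lemma cube_add_one_sub_cube_pos (γ : ℝ) : 0 < γ ^ 3 + (1 - γ) ^ 3 := by
  nlinarith [sq_nonneg (2 * γ - 1)]

lemma one_sub_sq_div_cube_eq (γ : ℝ) :
    1 - (γ ^ 2 + (1 - γ) ^ 2) ^ 2 / (γ ^ 3 + (1 - γ) ^ 3) =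
      γ * ((1 - γ) * (1 - 2 * γ) ^ 2) / (γ ^ 3 + (1 - γ) ^ 3) := by
  field_simp [(cube_add_one_sub_cube_pos γ).ne']
  ring

lemma one_sub_mul_sq_le_cube_add_cube {γ : ℝ} (h0 : 0 ≤ γ) :
    (1 - γ) * (1 - 2 * γ) ^ 2 ≤ γ ^ 3 + (1 - γ) ^ 3 := by
  have key : γ ^ 3 + (1 - γ) ^ 3 - (1 - γ) * (1 - 2 * γ) ^ 2 = γ * (4 * γ ^ 2 - 5 * γ + 2) := by ring
  nlinarith [mul_nonneg h0 (by nlinarith [sq_nonneg (8 * γ - 5)] : (0 : ℝ) ≤ 4 * γ ^ 2 - 5 * γ + 2)]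

theorem gamma_ratio_bound_p3 (γ : ℝ) (h0 : 0 ≤ γ) (h1 : γ ≤ 1/4) :
    0 ≤ 1 - (γ^2 + (1-γ)^2)^2 / (γ^3 + (1-γ)^3) ∧
      1 - (γ^2 + (1-γ)^2)^2 / (γ^3 + (1-γ)^3) ≤ γ := by
  have hD := cube_add_one_sub_cube_pos γ
  rw [one_sub_sq_div_cube_eq]
  constructor
  · have : 0 ≤ 1 - γ := by linarith
    positivity
  · rw [div_le_iff₀ hD]
    exact mul_le_mul_of_nonneg_left (one_sub_mul_sq_le_cube_add_cube h0) h0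
end

section
/- For every real number γ with 0 ≤ γ ≤ 1/4, 0 ≤ 1 − (γ⁴ + (1−γ)⁴)² / ( (γ³ + (1−γ)³)(γ⁵ + (1−γ)⁵) ) ≤ 2γ³. -/
/-!
With `a = γ` and `b = 1 - γ`, the Lagrange identity
`(a³ + b³)(a⁵ + b⁵) - (a⁴ + b⁴)² = a³b³(a - b)²` turns the quantity into
`a³ · b³(a - b)² / ((a³ + b³)(a⁵ + b⁵))`, which is nonnegative. For `0 ≤ a ≤ b` one has
`(b - a)(a + b) ≤ b²` and `a + b ≤ 2b`, so `b³(b - a)²(a + b)³ ≤ 2b⁸`, and with `a + b = 1`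
the second factor is at most `2`.
-/

theorem pow_three_add_mul_pow_five_add_sub_sq {R : Type*} [CommRing R] (a b : R) :
    (a^3 + b^3) * (a^5 + b^5) - (a^4 + b^4)^2 = a^3 * b^3 * (a - b)^2 := by
  ring

theorem one_sub_sq_div_eq {K : Type*} [Field K] (a b : K)
    (hD : (a^3 + b^3) * (a^5 + b^5) ≠ 0) :
    1 - (a^4 + b^4)^2 / ((a^3 + b^3) * (a^5 + b^5)) =
      a^3 * (b^3 * (a - b)^2 / ((a^3 + b^3) * (a^5 + b^5))) := by
  rw [mul_div_assoc', ← mul_assoc, ← pow_three_add_mul_pow_five_add_sub_sq, one_sub_div hD]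

theorem pow_three_mul_sq_mul_pow_three_le {R : Type*} [CommRing R] [LinearOrder R]
    [IsStrictOrderedRing R] {a b : R} (ha : 0 ≤ a) (hab : a ≤ b) :
    b^3 * (a - b)^2 * (a + b)^3 ≤ 2 * ((a^3 + b^3) * (a^5 + b^5)) := by
  have hb : 0 ≤ b := ha.trans hab
  have hsq : (b - a) * (a + b) ≤ b^2 := by nlinarith
  calc b^3 * (a - b)^2 * (a + b)^3 = b^3 * ((b - a) * (a + b))^2 * (a + b) := by ring
    _ ≤ b^3 * (b^2)^2 * (2 * b) := by gcongr; linarith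
    _ = 2 * (b^3 * b^5) := by ring
    _ ≤ 2 * ((a^3 + b^3) * (a^5 + b^5)) := by gcongr <;> linarith [pow_nonneg ha 3, pow_nonneg ha 5]

theorem gamma_ratio_bound_p5 (γ : ℝ) (h0 : 0 ≤ γ) (h1 : γ ≤ 1/4) :
    0 ≤ 1 - (γ^4 + (1-γ)^4)^2 / ((γ^3 + (1-γ)^3) * (γ^5 + (1-γ)^5)) ∧
      1 - (γ^4 + (1-γ)^4)^2 / ((γ^3 + (1-γ)^3) * (γ^5 + (1-γ)^5)) ≤ 2 * γ^3 := by
  have hb : 0 < 1 - γ := by linarith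
  have hD : 0 < (γ^3 + (1-γ)^3) * (γ^5 + (1-γ)^5) := by positivity
  rw [one_sub_sq_div_eq γ (1 - γ) hD.ne']
  refine ⟨by positivity, ?_⟩
  rw [mul_comm 2]
  gcongr
  rw [div_le_iff₀ hD]
  simpa using pow_three_mul_sq_mul_pow_three_le h0 (show γ ≤ 1 - γ by linarith)
end

section
/- Let q ≥ 1 be an integer and let s_2, s_3, t_3 : [0, 1/4] → ℝ be continuous functions. Set K_3 = max_{γ ∈ [0,1/4]} ( s_3(γ) − s_2(γ)² t_3(γ) ) and H_3 = max_{γ ∈ [0,1/4]} | s_2(γ)² t_3(γ) |, and assume K_3 < 0 and H_3 > 0. Define γ_3 = −K_3/(4 H_3), and for an integer L ≥ 4q and γ ∈ [0, 1/4], define f_3(γ, L) = s_3(γ) − s_2(γ)² t_3(γ) · [ (γ² + (1−γ)²)² / (γ³ + (1−γ)³) ]^{L − 4q}. Then for every integer L ≥ 4q and every real γ with 0 ≤ γ ≤ min{ 1/4, γ_3 / L }, one has f_3(γ, L) ≤ K_3 / 2. -/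
/-!
Write `r(γ) = (γ² + (1 - γ)²)² / (γ³ + (1 - γ)³)`. On `[0, 1]` one has `1 - γ ≤ r(γ) ≤ 1`,
so by Bernoulli's inequality `0 ≤ 1 - r(γ)ⁿ ≤ n γ ≤ L γ ≤ -K₃ / (4 H₃)` for `n = L - 4q`.
Splitting `f₃(γ, L) = (s₃ - s₂² t₃) + s₂² t₃ (1 - r(γ)ⁿ)` then gives
`f₃(γ, L) ≤ K₃ + H₃ · (-K₃ / (4 H₃)) = 3 K₃ / 4`, which is at most `K₃ / 2` because `K₃ < 0`.
-/

noncomputable def depolRatio (γ : ℝ) : ℝ :=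
  (γ ^ 2 + (1 - γ) ^ 2) ^ 2 / (γ ^ 3 + (1 - γ) ^ 3)

lemma depolRatio_nonneg (γ : ℝ) : 0 ≤ depolRatio γ :=
  div_nonneg (by positivity) (cube_add_one_sub_cube_pos γ).le

-- With `u = γ (1 - γ)` this is `(1 - 2u)² ≤ 1 - 3u`, i.e. `u ≤ 1/4`, for `u ≥ 0`.
lemma depolRatio_le_one {γ : ℝ} (h0 : 0 ≤ γ) (h1 : γ ≤ 1) : depolRatio γ ≤ 1 := by
  rw [depolRatio, div_le_one (cube_add_one_sub_cube_pos γ)]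
  nlinarith [mul_nonneg h0 (sub_nonneg.2 h1), sq_nonneg (2 * γ - 1)]

-- The difference of the two sides, cleared of denominators, is `γ² (4γ² - 5γ + 2)`.
lemma one_sub_le_depolRatio (γ : ℝ) : 1 - γ ≤ depolRatio γ := by
  rw [depolRatio, le_div_iff₀ (cube_add_one_sub_cube_pos γ)]
  have hquad : 0 ≤ 4 * γ ^ 2 - 5 * γ + 2 := by nlinarith [sq_nonneg (8 * γ - 5)]
  nlinarith [mul_nonneg (sq_nonneg γ) hquad]

lemma one_sub_depolRatio_pow_le (γ : ℝ) (n : ℕ) : 1 - depolRatio γ ^ n ≤ n * γ :=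
  have hr : -1 ≤ depolRatio γ := by linarith [depolRatio_nonneg γ]
  calc 1 - depolRatio γ ^ n ≤ n * (1 - depolRatio γ) := by
        linarith [one_add_mul_sub_le_pow hr n]
    _ ≤ n * γ := by gcongr; linarith [one_sub_le_depolRatio γ]

theorem p3_PPT_violation_uniform_general
    (q : ℕ) (s2 s3 t3 : ℝ → ℝ)
    (K3 H3 : ℝ)
    (hK3 : IsGreatest ((fun γ => s3 γ - (s2 γ) ^ 2 * t3 γ) '' Set.Icc 0 (1/4)) K3)
    (hH3 : IsGreatest ((fun γ => |(s2 γ) ^ 2 * t3 γ|) '' Set.Icc 0 (1/4)) H3)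
    (hK3neg : K3 < 0) (hH3pos : 0 < H3)
    (L : ℕ)
    (γ : ℝ) (hγ0 : 0 ≤ γ) (hγ : γ ≤ min (1/4) (-K3 / (4 * H3) / L)) :
    s3 γ - (s2 γ) ^ 2 * t3 γ *
        ((γ ^ 2 + (1 - γ) ^ 2) ^ 2 / (γ ^ 3 + (1 - γ) ^ 3)) ^ (L - 4 * q)
      ≤ K3 / 2 := by
  have hγ1 : γ ≤ 1 / 4 := hγ.trans (min_le_left _ _)
  have hmem : γ ∈ Set.Icc (0 : ℝ) (1 / 4) := ⟨hγ0, hγ1⟩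
  have hK : s3 γ - s2 γ ^ 2 * t3 γ ≤ K3 := hK3.2 ⟨γ, hmem, rfl⟩
  have hH : |s2 γ ^ 2 * t3 γ| ≤ H3 := hH3.2 ⟨γ, hmem, rfl⟩
  change s3 γ - s2 γ ^ 2 * t3 γ * depolRatio γ ^ (L - 4 * q) ≤ K3 / 2
  set δ := 1 - depolRatio γ ^ (L - 4 * q) with hδ_def
  have hδ0 : 0 ≤ δ :=
    sub_nonneg.2 (pow_le_one₀ (depolRatio_nonneg γ) (depolRatio_le_one hγ0 (by linarith)))
  have hδ : δ ≤ -K3 / (4 * H3) :=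
    calc δ ≤ ((L - 4 * q : ℕ) : ℝ) * γ := one_sub_depolRatio_pow_le γ _
      _ ≤ L * γ := by gcongr; exact Nat.sub_le L (4 * q)
      _ ≤ -K3 / (4 * H3) :=
        mul_comm γ L ▸ mul_le_of_le_div₀ (div_nonneg (by linarith) (by linarith)) L.cast_nonneg
          (hγ.trans (min_le_right _ _))
  have hcorr : s2 γ ^ 2 * t3 γ * δ ≤ -K3 / 4 :=
    calc s2 γ ^ 2 * t3 γ * δ ≤ |s2 γ ^ 2 * t3 γ| * δ :=
          mul_le_mul_of_nonneg_right (le_abs_self _) hδ0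
      _ ≤ H3 * (-K3 / (4 * H3)) := mul_le_mul hH hδ hδ0 hH3pos.le
      _ = -K3 / 4 := by field_simp
  calc s3 γ - s2 γ ^ 2 * t3 γ * depolRatio γ ^ (L - 4 * q)
        = (s3 γ - s2 γ ^ 2 * t3 γ) + s2 γ ^ 2 * t3 γ * δ := by rw [hδ_def]; ring
    _ ≤ K3 / 2 := by linarith

/-- Violation of the `p₃`-PPT condition for depolarized FDQC states:
if `K₃ < 0` then `f₃(γ, L) ≤ K₃/2` for all `0 ≤ γ ≤ min{1/4, γ₃/L}`. -/
theorem p3_PPT_violation_uniform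
    (q : ℕ) (hq : 1 ≤ q) (s2 s3 t3 : ℝ → ℝ)
    (hs2 : ContinuousOn s2 (Set.Icc 0 (1/4)))
    (hs3 : ContinuousOn s3 (Set.Icc 0 (1/4)))
    (ht3 : ContinuousOn t3 (Set.Icc 0 (1/4)))
    (K3 H3 : ℝ)
    (hK3 : IsGreatest ((fun γ => s3 γ - (s2 γ) ^ 2 * t3 γ) '' Set.Icc 0 (1/4)) K3)
    (hH3 : IsGreatest ((fun γ => |(s2 γ) ^ 2 * t3 γ|) '' Set.Icc 0 (1/4)) H3)
    (hK3neg : K3 < 0) (hH3pos : 0 < H3)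
    (L : ℕ) (hL : 4 * q ≤ L)
    (γ : ℝ) (hγ0 : 0 ≤ γ) (hγ : γ ≤ min (1/4) (-K3 / (4 * H3) / L)) :
    s3 γ - (s2 γ) ^ 2 * t3 γ *
        ((γ ^ 2 + (1 - γ) ^ 2) ^ 2 / (γ ^ 3 + (1 - γ) ^ 3)) ^ (L - 4 * q)
      ≤ K3 / 2 :=
  p3_PPT_violation_uniform_general q s2 s3 t3 K3 H3 hK3 hH3 hK3neg hH3pos L γ hγ0 hγ
end

section
/- Let q ≥ 1 be an integer and let s_3, s_4, s_5, t_5 : [0, 1/4] → ℝ be continuous functions. Set K_5 = max_{γ ∈ [0,1/4]} ( s_5(γ) s_3(γ) − s_4(γ)² t_5(γ) ) and H_5 = max_{γ ∈ [0,1/4]} | s_4(γ)² t_5(γ) |, and assume K_5 < 0 and H_5 > 0. Define γ_5 = ( −K_5/(8 H_5) )^{1/3}, and for an integer L ≥ 4q and γ ∈ [0, 1/4], define f_5(γ, L) = s_5(γ) s_3(γ) − s_4(γ)² t_5(γ) · [ (γ⁴ + (1−γ)⁴)² / ( (γ³ + (1−γ)³)(γ⁵ + (1−γ)⁵) ) ]^{L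 − 4q}. Then for every integer L ≥ 4q and every real γ with 0 ≤ γ ≤ min{ 1/4, γ_5 / L^{1/3} }, one has f_5(γ, L) ≤ K_5 / 2. -/
/-!
Write `f₅ = A - B rᴸ⁻⁴ᵠ` with `A - B ≤ K₅` and `|B| ≤ H₅`, so that
`f₅ ≤ K₅ + H₅ (1 - rᴸ⁻⁴ᵠ)`. With `b = 1 - γ`, the base `r` is `N / D` where
`D - N = γ³ b³ (b - γ)²` (Cauchy–Schwarz with its defect), hence `0 ≤ r ≤ 1` and
`1 - r ≤ γ³ b⁵ / b⁸ ≤ 4γ³` on `[0, 1/4]`. Bernoulli's inequality then gives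
`1 - rᴸ⁻⁴ᵠ ≤ 4Lγ³ ≤ 4γ₅³ = -K₅ / (2H₅)`.
-/

noncomputable def p5Base (γ : ℝ) : ℝ :=
  (γ ^ 4 + (1 - γ) ^ 4) ^ 2 / ((γ ^ 3 + (1 - γ) ^ 3) * (γ ^ 5 + (1 - γ) ^ 5))

lemma p5Base_denom_sub_numer (γ : ℝ) :
    (γ ^ 3 + (1 - γ) ^ 3) * (γ ^ 5 + (1 - γ) ^ 5) - (γ ^ 4 + (1 - γ) ^ 4) ^ 2 =
      γ ^ 3 * (1 - γ) ^ 3 * (1 - 2 * γ) ^ 2 := by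
  ring

lemma p5Base_denom_pos (γ : ℝ) :
    0 < (γ ^ 3 + (1 - γ) ^ 3) * (γ ^ 5 + (1 - γ) ^ 5) := by
  have h3 : γ ^ 3 + (1 - γ) ^ 3 = 1 / 4 + 3 * (γ - 1 / 2) ^ 2 := by ring
  have h5 : γ ^ 5 + (1 - γ) ^ 5 = 1 / 16 + 5 / 2 * (γ - 1 / 2) ^ 2 + 5 * (γ - 1 / 2) ^ 4 := by
    ring
  rw [h3, h5]
  positivity

lemma p5Base_nonneg (γ : ℝ) : 0 ≤ p5Base γ :=
  div_nonneg (sq_nonneg _) (p5Base_denom_pos γ).le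

lemma p5Base_le_one {γ : ℝ} (h0 : 0 ≤ γ) (h1 : γ ≤ 1) : p5Base γ ≤ 1 := by
  rw [p5Base, div_le_one (p5Base_denom_pos γ), ← sub_nonneg, p5Base_denom_sub_numer]
  have : 0 ≤ 1 - γ := by linarith
  positivity

lemma one_sub_p5Base_le {γ : ℝ} (h0 : 0 ≤ γ) (h1 : γ ≤ 1 / 4) :
    1 - p5Base γ ≤ 4 * γ ^ 3 := by
  set b := 1 - γ
  have hb0 : 0 ≤ b := by linarith
  have hbγ : (1 - 2 * γ) ^ 2 ≤ b ^ 2 := by nlinarith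
  have hb3 : 1 / 4 ≤ b ^ 3 := by
    nlinarith [pow_le_pow_left₀ (by norm_num) (by linarith : 3 / 4 ≤ b) 3]
  have hD := p5Base_denom_pos γ
  have hb8 : b ^ 8 ≤ (γ ^ 3 + b ^ 3) * (γ ^ 5 + b ^ 5) := by
    nlinarith [pow_nonneg h0 8, mul_nonneg (pow_nonneg h0 3) (pow_nonneg hb0 5),
      mul_nonneg (pow_nonneg h0 5) (pow_nonneg hb0 3)]
  rw [p5Base, one_sub_div hD.ne', p5Base_denom_sub_numer, div_le_iff₀ hD]
  calc γ ^ 3 * b ^ 3 * (1 - 2 * γ) ^ 2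
      ≤ γ ^ 3 * b ^ 3 * b ^ 2 := by gcongr
    _ = γ ^ 3 * b ^ 5 * 1 := by ring
    _ ≤ γ ^ 3 * b ^ 5 * (4 * b ^ 3) := by gcongr; linarith
    _ = 4 * γ ^ 3 * b ^ 8 := by ring
    _ ≤ 4 * γ ^ 3 * ((γ ^ 3 + b ^ 3) * (γ ^ 5 + b ^ 5)) := by gcongr

lemma mul_pow_three_le_of_le_rpow_div {x y t : ℝ} (hx : 0 ≤ x) (hy : 0 ≤ y) (ht : 0 ≤ t)
    (h : t ≤ x ^ ((1 : ℝ) / 3) / y ^ ((1 : ℝ) / 3)) : y * t ^ 3 ≤ x := by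
  rcases ht.eq_or_lt with rfl | ht
  · simpa using hx
  have hy : 0 < y := by
    by_contra! hy0
    rw [le_antisymm hy0 hy, Real.zero_rpow (by norm_num), div_zero] at h
    exact ht.not_ge h
  have hcube (z : ℝ) (hz : 0 ≤ z) : (z ^ ((1 : ℝ) / 3)) ^ 3 = z := by
    rw [← Real.rpow_natCast, ← Real.rpow_mul hz]
    norm_num
  have h3 := pow_le_pow_left₀ ht.le h 3
  rw [div_pow, hcube x hx, hcube y hy.le, le_div_iff₀ hy] at h3
  linarith

theorem p5_PPT_violation_uniform_general
    (q : ℕ) (s3 s4 s5 t5 : ℝ → ℝ)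
    (K5 H5 : ℝ)
    (hK5 : IsGreatest ((fun γ => s5 γ * s3 γ - (s4 γ) ^ 2 * t5 γ) '' Set.Icc 0 (1/4)) K5)
    (hH5 : IsGreatest ((fun γ => |(s4 γ) ^ 2 * t5 γ|) '' Set.Icc 0 (1/4)) H5)
    (hK5neg : K5 < 0) (hH5pos : 0 < H5)
    (L : ℕ)
    (γ : ℝ) (hγ0 : 0 ≤ γ)
    (hγ : γ ≤ min (1/4) ((-K5 / (8 * H5)) ^ ((1:ℝ)/3) / (L:ℝ) ^ ((1:ℝ)/3))) :
    s5 γ * s3 γ - (s4 γ) ^ 2 * t5 γ *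
        ((γ ^ 4 + (1 - γ) ^ 4) ^ 2 /
          ((γ ^ 3 + (1 - γ) ^ 3) * (γ ^ 5 + (1 - γ) ^ 5))) ^ (L - 4 * q)
      ≤ K5 / 2 := by
  change _ - _ * p5Base γ ^ (L - 4 * q) ≤ _
  set B := s4 γ ^ 2 * t5 γ
  set r := p5Base γ
  set n := L - 4 * q
  have hγ1 : γ ≤ 1 / 4 := hγ.trans (min_le_left _ _)
  have hA : s5 γ * s3 γ - B ≤ K5 := hK5.2 ⟨γ, ⟨hγ0, hγ1⟩, rfl⟩
  have hB : |B| ≤ H5 := hH5.2 ⟨γ, ⟨hγ0, hγ1⟩, rfl⟩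
  have hLγ : (L : ℝ) * γ ^ 3 ≤ -K5 / (8 * H5) :=
    mul_pow_three_le_of_le_rpow_div (div_nonneg (by linarith) (by linarith)) L.cast_nonneg hγ0
      (hγ.trans (min_le_right _ _))
  have hr0 : 0 ≤ r := p5Base_nonneg γ
  have hr1 : r ≤ 1 := p5Base_le_one hγ0 (by linarith)
  have hdecay_nonneg : 0 ≤ 1 - r ^ n := sub_nonneg.2 (pow_le_one₀ hr0 hr1)
  have hdecay : 1 - r ^ n ≤ -K5 / (2 * H5) := by
    have hn : (n : ℝ) ≤ L := by exact_mod_cast L.sub_le _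
    have hbern := one_add_mul_sub_le_pow (by linarith : (-1 : ℝ) ≤ r) n
    have hr : 1 - r ≤ 4 * γ ^ 3 := one_sub_p5Base_le hγ0 hγ1
    calc 1 - r ^ n ≤ n * (1 - r) := by linarith
      _ ≤ L * (4 * γ ^ 3) := by gcongr
      _ ≤ 4 * (-K5 / (8 * H5)) := by linarith
      _ = -K5 / (2 * H5) := by ring
  have hBdecay : B * (1 - r ^ n) ≤ -K5 / 2 :=
    calc B * (1 - r ^ n) ≤ |B| * (1 - r ^ n) := by gcongr; exact le_abs_self B
      _ ≤ H5 * (-K5 / (2 * H5)) := by gcongr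
      _ = -K5 / 2 := by field_simp
  linarith

/-- Violation of the `p₅`-PPT condition for depolarized FDQC states:
if `K₅ < 0` then `f₅(γ, L) ≤ K₅/2` for all `0 ≤ γ ≤ min{1/4, γ₅/L^{1/3}}`. -/
theorem p5_PPT_violation_uniform
    (q : ℕ) (hq : 1 ≤ q) (s3 s4 s5 t5 : ℝ → ℝ)
    (hs3 : ContinuousOn s3 (Set.Icc 0 (1/4)))
    (hs4 : ContinuousOn s4 (Set.Icc 0 (1/4)))
    (hs5 : ContinuousOn s5 (Set.Icc 0 (1/4)))
    (ht5 : ContinuousOn t5 (Set.Icc 0 (1/4)))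
    (K5 H5 : ℝ)
    (hK5 : IsGreatest ((fun γ => s5 γ * s3 γ - (s4 γ) ^ 2 * t5 γ) '' Set.Icc 0 (1/4)) K5)
    (hH5 : IsGreatest ((fun γ => |(s4 γ) ^ 2 * t5 γ|) '' Set.Icc 0 (1/4)) H5)
    (hK5neg : K5 < 0) (hH5pos : 0 < H5)
    (L : ℕ) (hL : 4 * q ≤ L)
    (γ : ℝ) (hγ0 : 0 ≤ γ)
    (hγ : γ ≤ min (1/4) ((-K5 / (8 * H5)) ^ ((1:ℝ)/3) / (L:ℝ) ^ ((1:ℝ)/3))) :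
    s5 γ * s3 γ - (s4 γ) ^ 2 * t5 γ *
        ((γ ^ 4 + (1 - γ) ^ 4) ^ 2 /
          ((γ ^ 3 + (1 - γ) ^ 3) * (γ ^ 5 + (1 - γ) ^ 5))) ^ (L - 4 * q)
      ≤ K5 / 2 :=
  p5_PPT_violation_uniform_general q s3 s4 s5 t5 K5 H5 hK5 hH5 hK5neg hH5pos L γ hγ0 hγ
end
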